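/- arXiv:2002.12795 — 8 statements merged into one kernel-verified Lean document; each statement's English description precedes it below -/
import Mathlib

section
/- If (W,S) ≠ (0,0) is a critical point of J (i.e., (WS−X)Sᵀ = 0 and Wᵀ(WS−X) = 0), then for any K ∈ ℝ^{k×k}, the direction (WK, −KS) satisfies ∇²J(W,S)[(WK,−KS)] = 0; hence every nonzero critical point of J is a degenerate critical point. -/
open Matrix

/-- at a nonzero critical point (W,S) of J, the Hessian map
kills every direction (WK, −KS); hence nonzero critical points are degenerate. -/
theorem critical_point_degenerate {m n k : ℕ}
    (X : Matrix (Fin m) (Fin n) ℝ)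
    (W : Matrix (Fin m) (Fin k) ℝ) (S : Matrix (Fin k) (Fin n) ℝ)
    (hne : ¬(W = 0 ∧ S = 0))
    (hc1 : (W * S - X) * Sᵀ = 0)
    (hc2 : Wᵀ * (W * S - X) = 0) :
    ∀ K : Matrix (Fin k) (Fin k) ℝ,
      (W * K) * (S * Sᵀ) + W * (-(K * S)) * Sᵀ + (W * S - X) * (-(K * S))ᵀ = 0 ∧
      Wᵀ * W * (-(K * S)) + Wᵀ * (W * K) * S + (W * K)ᵀ * (W * S - X) = 0 := by
  intro K
  constructor
  · have h1 : (W * S - X) * (-(K * S))ᵀ = 0 := by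
      rw [transpose_neg, transpose_mul, Matrix.mul_neg, ← Matrix.mul_assoc, hc1,
        Matrix.zero_mul, neg_zero]
    rw [h1, add_zero, Matrix.mul_neg, Matrix.neg_mul, ← Matrix.mul_assoc,
      Matrix.mul_assoc W K S, add_neg_cancel]
  · have h2 : (W * K)ᵀ * (W * S - X) = 0 := by
      rw [transpose_mul, Matrix.mul_assoc, hc2, Matrix.mul_zero]
    rw [h2, add_zero, Matrix.mul_neg]
    simp only [Matrix.mul_assoc]
    exact neg_add_cancel _
end

section
/- If (W,S) is a critical point of J with λ := λ_min(∇²J(W,S)) < 0, then for any invertible A ∈ GL(k), λ_min(∇²J(WA, A⁻¹S)) ≤ λ / max{λ_max(AAᵀ), λ_min(AAᵀ)⁻¹}; in particular (WA, A⁻¹S) is also a strict saddle. -/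
open Matrix

/-- Second derivative D²J(W,S)[(G,H)]. -/
noncomputable def D2J {m n k : ℕ} (X : Matrix (Fin m) (Fin n) ℝ)
    (W G : Matrix (Fin m) (Fin k) ℝ) (S H : Matrix (Fin k) (Fin n) ℝ) : ℝ :=
  ((G * S)ᵀ * (G * S)).trace + ((W * H)ᵀ * (W * H)).trace
    + 2 * (Hᵀ * Wᵀ * (G * S) + Hᵀ * Gᵀ * (W * S - X)).trace

/-- The least eigenvalue of the Hessian map of J at (W,S), defined as the
infimum of the Rayleigh quotient. -/
noncomputable def lamMin {m n k : ℕ} (X : Matrix (Fin m) (Fin n) ℝ)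
    (W : Matrix (Fin m) (Fin k) ℝ) (S : Matrix (Fin k) (Fin n) ℝ) : ℝ :=
  sInf { r : ℝ | ∃ (G : Matrix (Fin m) (Fin k) ℝ) (H : Matrix (Fin k) (Fin n) ℝ),
    ¬(G = 0 ∧ H = 0) ∧
    r = D2J X W G S H / ((Gᵀ * G).trace + (Hᵀ * H).trace) }


lemma quad_eq {kk : ℕ} (U : Matrix (Fin kk) (Fin kk) ℝ) 
    (d : Fin kk → ℝ) (x : Fin kk → ℝ) :
    x ⬝ᵥ ((U * diagonal d * star U) *ᵥ x) = ∑ i, d i * ((star U *ᵥ x) i)^2 := by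
  have hstar : (star U : Matrix (Fin kk) (Fin kk) ℝ) = Uᵀ := rfl
  rw [← mulVec_mulVec, ← mulVec_mulVec, dotProduct_mulVec]
  have hv : x ᵥ* U = Uᵀ *ᵥ x := by
    ext i; simp [vecMul, mulVec, dotProduct, mul_comm]
  rw [hv, ← hstar]
  simp [dotProduct, mulVec_diagonal]
  exact Finset.sum_congr rfl fun i _ => by ring

lemma sq_sum_eq {kk : ℕ} (U : Matrix (Fin kk) (Fin kk) ℝ) (hU : U ∈ Matrix.unitaryGroup (Fin kk) ℝ)
    (x : Fin kk → ℝ) : ∑ i, ((star U *ᵥ x) i)^2 = x ⬝ᵥ x := by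
  have h1 : U * star U = 1 := (Matrix.mem_unitaryGroup_iff).mp hU
  have hstar : (star U : Matrix (Fin kk) (Fin kk) ℝ) = Uᵀ := rfl
  have hv : x ᵥ* U = Uᵀ *ᵥ x := by
    ext i; simp [vecMul, mulVec, dotProduct, mul_comm]
  calc ∑ i, ((star U *ᵥ x) i)^2 = (star U *ᵥ x) ⬝ᵥ (star U *ᵥ x) := by
        simp [dotProduct, pow_two]
    _ = (x ᵥ* U) ⬝ᵥ (star U *ᵥ x) := by rw [hv, hstar]
    _ = x ⬝ᵥ x := by
        rw [dotProduct_mulVec, vecMul_vecMul, h1, vecMul_one]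

lemma quad_le_sup {kk : ℕ} {M : Matrix (Fin (kk+1)) (Fin (kk+1)) ℝ} (hM : M.IsHermitian)
    (x : Fin (kk+1) → ℝ) :
    x ⬝ᵥ (M *ᵥ x) ≤ (⨆ i, hM.eigenvalues i) * (x ⬝ᵥ x) := by
  set U : Matrix (Fin (kk+1)) (Fin (kk+1)) ℝ := ↑(hM.eigenvectorUnitary) with hUdef
  have hspec : M = U * diagonal hM.eigenvalues * star U := by
    have := hM.spectral_theorem
    simpa using this
  conv_lhs => rw [hspec]
  rw [quad_eq, ← sq_sum_eq U hM.eigenvectorUnitary.2 x, Finset.mul_sum]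
  apply Finset.sum_le_sum
  intro i _
  have h1 : hM.eigenvalues i ≤ ⨆ j, hM.eigenvalues j :=
    le_ciSup (Set.Finite.bddAbove (Set.finite_range _)) i
  nlinarith [sq_nonneg ((star U *ᵥ x) i)]

lemma inv_quad_le {kk : ℕ} {M : Matrix (Fin (kk+1)) (Fin (kk+1)) ℝ} (hP : M.PosDef)
    (x : Fin (kk+1) → ℝ) :
    x ⬝ᵥ (M⁻¹ *ᵥ x) ≤ (⨅ i, hP.1.eigenvalues i)⁻¹ * (x ⬝ᵥ x) := by
  have hM := hP.1
  set U : Matrix (Fin (kk+1)) (Fin (kk+1)) ℝ := ↑(hM.eigenvectorUnitary) with hUdef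
  have hUU : star U * U = 1 := (Matrix.mem_unitaryGroup_iff').mp hM.eigenvectorUnitary.2
  have hspec : M = U * diagonal hM.eigenvalues * star U := by
    have := hM.spectral_theorem
    simpa using this
  have hpos : ∀ i, 0 < hM.eigenvalues i := hP.eigenvalues_pos
  have hinv : M⁻¹ = U * diagonal (fun i => (hM.eigenvalues i)⁻¹) * star U := by
    apply Matrix.inv_eq_right_inv
    nth_rewrite 1 [hspec]
    calc U * diagonal hM.eigenvalues * star U * (U * diagonal (fun i => (hM.eigenvalues i)⁻¹) * star U)
        = U * diagonal hM.eigenvalues * (star U * U) * diagonal (fun i => (hM.eigenvalues i)⁻¹) * star U := by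
          noncomm_ring
      _ = U * (diagonal hM.eigenvalues * diagonal (fun i => (hM.eigenvalues i)⁻¹)) * star U := by
          rw [hUU]; noncomm_ring
      _ = 1 := by
          rw [diagonal_mul_diagonal]
          have : (fun i => hM.eigenvalues i * (hM.eigenvalues i)⁻¹) = fun _ => (1:ℝ) := by
            funext i; exact mul_inv_cancel₀ (hpos i).ne'
          rw [this, diagonal_one, mul_one]
          exact (Matrix.mem_unitaryGroup_iff).mp hM.eigenvectorUnitary.2
  conv_lhs => rw [hinv]
  rw [quad_eq, ← sq_sum_eq U hM.eigenvectorUnitary.2 x, Finset.mul_sum]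
  apply Finset.sum_le_sum
  intro i _
  have hipos : 0 < ⨅ j, hM.eigenvalues j := by
    obtain ⟨j, hj⟩ := exists_eq_ciInf_of_finite (f := hM.eigenvalues)
    rw [← hj]; exact hpos j
  have h1 : ⨅ j, hM.eigenvalues j ≤ hM.eigenvalues i :=
    ciInf_le (Set.Finite.bddBelow (Set.finite_range _)) i
  have h2 : (hM.eigenvalues i)⁻¹ ≤ (⨅ j, hM.eigenvalues j)⁻¹ :=
    one_div_le_one_div_of_le hipos h1 |>.trans_eq (by rw [one_div]) |> fun h => by
      simpa [one_div] using one_div_le_one_div_of_le hipos h1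
  nlinarith [sq_nonneg ((star U *ᵥ x) i)]

lemma trace_form' {p q : ℕ} (P Q : Matrix (Fin p) (Fin q) ℝ) :
    (Pᵀ * Q).trace = ∑ x : Fin p × Fin q, P x.1 x.2 * Q x.1 x.2 := by
  rw [Matrix.trace, Fintype.sum_prod_type_right]
  simp [Matrix.mul_apply, Matrix.diag]

lemma row_quad {kk : ℕ} (A : Matrix (Fin kk) (Fin kk) ℝ) (x : Fin kk → ℝ) :
    (x ᵥ* A) ⬝ᵥ (x ᵥ* A) = x ⬝ᵥ ((A * Aᵀ) *ᵥ x) := by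
  rw [← mulVec_mulVec, dotProduct_mulVec, ← Matrix.mulVec_transpose]

lemma col_quad {kk : ℕ} (B : Matrix (Fin kk) (Fin kk) ℝ) (x : Fin kk → ℝ) :
    (B *ᵥ x) ⬝ᵥ (B *ᵥ x) = x ⬝ᵥ ((Bᵀ * B) *ᵥ x) := by
  rw [← mulVec_mulVec, dotProduct_mulVec, ← Matrix.mulVec_transpose]
  exact dotProduct_comm _ _

lemma trace_rows {p q : ℕ} (G : Matrix (Fin p) (Fin q) ℝ) :
    (Gᵀ * G).trace = ∑ i, (G i) ⬝ᵥ (G i) := by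
  rw [trace_form', Fintype.sum_prod_type]
  simp [dotProduct]

lemma trace_cols {p q : ℕ} (H : Matrix (Fin p) (Fin q) ℝ) :
    (Hᵀ * H).trace = ∑ j, (fun i => H i j) ⬝ᵥ (fun i => H i j) := by
  rw [trace_form', Fintype.sum_prod_type_right]
  simp [dotProduct]

lemma row_mul {p q : ℕ} (G : Matrix (Fin p) (Fin q) ℝ) (A : Matrix (Fin q) (Fin q) ℝ) (i : Fin p) :
    (G * A) i = (G i) ᵥ* A := by
  funext j; simp [Matrix.mul_apply, vecMul, dotProduct]

lemma col_mul {p q : ℕ} (B : Matrix (Fin p) (Fin p) ℝ) (H : Matrix (Fin p) (Fin q) ℝ) (j : Fin q) :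
    (fun i => (B * H) i j) = B *ᵥ (fun i => H i j) := by
  funext i; simp [Matrix.mul_apply, mulVec, dotProduct]

lemma posdef_AAT {kk : ℕ} (A : Matrix (Fin kk) (Fin kk) ℝ) (hA : IsUnit A)
    (hM : (A * Aᵀ).IsHermitian) : (A * Aᵀ).PosDef := by
  refine Matrix.PosDef.of_dotProduct_mulVec_pos hM fun x hx => ?_
  have hdet : IsUnit A.det := (Matrix.isUnit_iff_isUnit_det A).mp hA
  have h1 : dotProduct (star x) ((A * Aᵀ) *ᵥ x) = (Aᵀ *ᵥ x) ⬝ᵥ (Aᵀ *ᵥ x) := by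
    have : (star x) = x := rfl
    rw [this, ← mulVec_mulVec, dotProduct_mulVec, ← Matrix.mulVec_transpose]
  rw [h1]
  rcases eq_or_ne (Aᵀ *ᵥ x) 0 with h | h
  · exfalso
    apply hx
    have hdetT : IsUnit Aᵀ.det := by rwa [Matrix.det_transpose]
    have := congrArg (fun v => (Aᵀ)⁻¹ *ᵥ v) h
    simpa [Matrix.mulVec_mulVec, Matrix.nonsing_inv_mul _ hdetT] using this
  · have := dotProduct_self_eq_zero (v := Aᵀ *ᵥ x)
    rcases lt_or_eq_of_le (Finset.sum_nonneg fun i _ => mul_self_nonneg _ : (0:ℝ) ≤ (Aᵀ *ᵥ x) ⬝ᵥ (Aᵀ *ᵥ x)) with hlt | heq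
    · exact hlt
    · exact absurd (this.mp heq.symm) h
lemma D2J_eq {m n k : ℕ} (X : Matrix (Fin m) (Fin n) ℝ)
    (W G : Matrix (Fin m) (Fin k) ℝ) (S H : Matrix (Fin k) (Fin n) ℝ) :
    D2J X W G S H = ((G * S + W * H)ᵀ * (G * S + W * H)).trace
      + 2 * (Hᵀ * Gᵀ * (W * S - X)).trace := by
  have e1 : ((G * S)ᵀ * (W * H)).trace = (Hᵀ * Wᵀ * (G * S)).trace := by
    rw [← Matrix.trace_transpose ((G * S)ᵀ * (W * H))]
    congr 1
    simp [Matrix.transpose_mul, Matrix.mul_assoc]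
  have e2 : ((W * H)ᵀ * (G * S)).trace = (Hᵀ * Wᵀ * (G * S)).trace := by
    congr 1
    simp [Matrix.transpose_mul, Matrix.mul_assoc]
  simp only [D2J, Matrix.transpose_add, Matrix.add_mul, Matrix.mul_add, Matrix.trace_add]
  rw [e1, e2]
  ring

lemma trace_form {p q : ℕ} (P Q : Matrix (Fin p) (Fin q) ℝ) :
    (Pᵀ * Q).trace = ∑ x : Fin p × Fin q, P x.1 x.2 * Q x.1 x.2 := by
  rw [Matrix.trace, Fintype.sum_prod_type_right]
  simp [Matrix.mul_apply, Matrix.diag]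


lemma trace_self_nonneg {p q : ℕ} (P : Matrix (Fin p) (Fin q) ℝ) :
    0 ≤ (Pᵀ * P).trace := by
  rw [trace_form]
  exact Finset.sum_nonneg fun x _ => mul_self_nonneg _

lemma trace_self_pos {p q : ℕ} (P : Matrix (Fin p) (Fin q) ℝ) (hP : P ≠ 0) :
    0 < (Pᵀ * P).trace := by
  rcases (trace_self_nonneg P).lt_or_eq with h | h
  · exact h
  · exfalso; apply hP
    have h0 : ∀ x ∈ (Finset.univ : Finset (Fin p × Fin q)), P x.1 x.2 * P x.1 x.2 = 0 := by
      intro x _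
      have := (Finset.sum_eq_zero_iff_of_nonneg (fun x _ => mul_self_nonneg (P x.1 x.2))).mp
        (by rw [← trace_form, ← h]) x (Finset.mem_univ x)
      exact this
    ext i j
    have := h0 (i, j) (Finset.mem_univ _)
    simpa [mul_self_eq_zero] using this

lemma trace_cs {p q : ℕ} (P Q : Matrix (Fin p) (Fin q) ℝ) :
    ((Pᵀ * Q).trace)^2 ≤ (Pᵀ * P).trace * (Qᵀ * Q).trace := by
  rw [trace_form, trace_form, trace_form]
  have := Finset.sum_mul_sq_le_sq_mul_sq Finset.univ
    (fun x : Fin p × Fin q => P x.1 x.2) (fun x => Q x.1 x.2)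
  simpa [pow_two] using this

lemma trace_submul {mm nn kk : ℕ} (E : Matrix (Fin mm) (Fin nn) ℝ)
    (H : Matrix (Fin kk) (Fin nn) ℝ) :
    ((E * Hᵀ)ᵀ * (E * Hᵀ)).trace ≤ (Eᵀ * E).trace * (Hᵀ * H).trace := by
  rw [trace_form, trace_form, trace_form]
  have key : ∀ x : Fin mm × Fin kk,
      (E * Hᵀ) x.1 x.2 * (E * Hᵀ) x.1 x.2
        ≤ (∑ j, E x.1 j ^ 2) * (∑ j, H x.2 j ^ 2) := by
    intro x
    have := Finset.sum_mul_sq_le_sq_mul_sq Finset.univ (fun j => E x.1 j) (fun j => H x.2 j)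
    simpa [Matrix.mul_apply, pow_two] using this
  calc ∑ x : Fin mm × Fin kk, (E * Hᵀ) x.1 x.2 * (E * Hᵀ) x.1 x.2
      ≤ ∑ x : Fin mm × Fin kk, (∑ j, E x.1 j ^ 2) * (∑ j, H x.2 j ^ 2) :=
        Finset.sum_le_sum fun x _ => key x
    _ = (∑ x : Fin mm × Fin nn, E x.1 x.2 * E x.1 x.2) *
        (∑ x : Fin kk × Fin nn, H x.1 x.2 * H x.1 x.2) := by
        simp only [Fintype.sum_prod_type, pow_two]
        rw [← Finset.sum_mul_sum]


lemma D2J_lower {m n k : ℕ} (X : Matrix (Fin m) (Fin n) ℝ)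
    (W G : Matrix (Fin m) (Fin k) ℝ) (S H : Matrix (Fin k) (Fin n) ℝ) :
    -((1 + ((W * S - X)ᵀ * (W * S - X)).trace) * ((Gᵀ * G).trace + (Hᵀ * H).trace))
      ≤ D2J X W G S H := by
  set E := W * S - X with hE
  set a := (Gᵀ * G).trace with ha
  set b := (Hᵀ * H).trace with hb
  set e := (Eᵀ * E).trace with he
  have ha0 : 0 ≤ a := trace_self_nonneg G
  have hb0 : 0 ≤ b := trace_self_nonneg H
  have he0 : 0 ≤ e := trace_self_nonneg E
  have hs : 0 ≤ ((G * S + W * H)ᵀ * (G * S + W * H)).trace := trace_self_nonneg _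
  have ht : (Hᵀ * Gᵀ * E).trace = (Gᵀ * (E * Hᵀ)).trace := by
    rw [Matrix.mul_assoc, Matrix.trace_mul_comm, Matrix.mul_assoc]
  have htsq : ((Hᵀ * Gᵀ * E).trace)^2 ≤ a * (e * b) := by
    rw [ht]
    calc ((Gᵀ * (E * Hᵀ)).trace)^2 ≤ (Gᵀ * G).trace * ((E * Hᵀ)ᵀ * (E * Hᵀ)).trace :=
          trace_cs G (E * Hᵀ)
      _ ≤ a * (e * b) := by
          have := trace_submul E H
          rw [← he, ← hb] at this
          exact mul_le_mul_of_nonneg_left this ha0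
  rw [D2J_eq]
  set t := (Hᵀ * Gᵀ * E).trace with htt
  have h16 : 16*(e*(a*b)) ≤ ((1+e)*(a+b))^2 := by
    nlinarith [sq_nonneg ((1-e)*(a+b)), mul_nonneg he0 (sq_nonneg (a-b))]
  have key : -((1+e)*(a+b)) ≤ 2*t := by
    nlinarith [htsq, h16, sq_nonneg t, mul_nonneg ha0 (mul_nonneg he0 hb0),
      mul_nonneg (add_nonneg (by linarith : (0:ℝ) ≤ 1+e) he0) (add_nonneg ha0 hb0)]
  linarith
lemma D2J_invariant {m n k : ℕ} (X : Matrix (Fin m) (Fin n) ℝ)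
    (W G : Matrix (Fin m) (Fin k) ℝ) (S H : Matrix (Fin k) (Fin n) ℝ)
    (A : Matrix (Fin k) (Fin k) ℝ) (hA : IsUnit A) :
    D2J X (W * A) (G * A) (A⁻¹ * S) (A⁻¹ * H) = D2J X W G S H := by
  have hdet : IsUnit A.det := (Matrix.isUnit_iff_isUnit_det A).mp hA
  have h1 : A * A⁻¹ = 1 := Matrix.mul_nonsing_inv A hdet
  have h2 : A⁻¹ * A = 1 := Matrix.nonsing_inv_mul A hdet
  have e1 : ∀ (p : ℕ) (Z : Matrix (Fin k) (Fin p) ℝ), A * (A⁻¹ * Z) = Z := by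
    intro p Z; rw [← Matrix.mul_assoc, h1, Matrix.one_mul]
  have e2 : ∀ (p : ℕ) (Z : Matrix (Fin k) (Fin p) ℝ), A⁻¹ * (A * Z) = Z := by
    intro p Z; rw [← Matrix.mul_assoc, h2, Matrix.one_mul]
  have e3 : ∀ (p : ℕ) (Z : Matrix (Fin k) (Fin p) ℝ), (A⁻¹)ᵀ * (Aᵀ * Z) = Z := by
    intro p Z; rw [← Matrix.mul_assoc, ← Matrix.transpose_mul, h1, Matrix.transpose_one,
      Matrix.one_mul]
  have e4 : ∀ (p : ℕ) (Z : Matrix (Fin k) (Fin p) ℝ), Aᵀ * ((A⁻¹)ᵀ * Z) = Z := by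
    intro p Z; rw [← Matrix.mul_assoc, ← Matrix.transpose_mul, h2, Matrix.transpose_one,
      Matrix.one_mul]
  simp only [D2J, Matrix.transpose_mul, Matrix.mul_assoc, e1, e2, e3, e4]

lemma denom_bound {mm nn kk : ℕ} (A : Matrix (Fin (kk+1)) (Fin (kk+1)) ℝ) (hA : IsUnit A)
    (hM : (A * Aᵀ).IsHermitian)
    (G : Matrix (Fin mm) (Fin (kk+1)) ℝ) (H : Matrix (Fin (kk+1)) (Fin nn) ℝ) :
    ((G * A)ᵀ * (G * A)).trace + ((A⁻¹ * H)ᵀ * (A⁻¹ * H)).trace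
      ≤ max (⨆ i, hM.eigenvalues i) ((⨅ i, hM.eigenvalues i)⁻¹)
        * ((Gᵀ * G).trace + (Hᵀ * H).trace) := by
  set c := max (⨆ i, hM.eigenvalues i) ((⨅ i, hM.eigenvalues i)⁻¹) with hc
  have hdet : IsUnit A.det := (Matrix.isUnit_iff_isUnit_det A).mp hA
  have hP : (A * Aᵀ).PosDef := posdef_AAT A hA hM
  have hinv : (A⁻¹)ᵀ * A⁻¹ = (A * Aᵀ)⁻¹ := by
    rw [Matrix.mul_inv_rev, Matrix.transpose_nonsing_inv]
  have hG : ((G * A)ᵀ * (G * A)).trace ≤ c * (Gᵀ * G).trace := by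
    rw [trace_rows, trace_rows (G := G), Finset.mul_sum]
    apply Finset.sum_le_sum
    intro i _
    rw [row_mul, row_quad]
    calc (G i) ⬝ᵥ ((A * Aᵀ) *ᵥ (G i)) ≤ (⨆ j, hM.eigenvalues j) * ((G i) ⬝ᵥ (G i)) :=
          quad_le_sup hM (G i)
      _ ≤ c * ((G i) ⬝ᵥ (G i)) := by
          apply mul_le_mul_of_nonneg_right (le_max_left _ _)
          exact Finset.sum_nonneg fun j _ => mul_self_nonneg _
  have hH : ((A⁻¹ * H)ᵀ * (A⁻¹ * H)).trace ≤ c * (Hᵀ * H).trace := by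
    rw [trace_cols, trace_cols (H := H), Finset.mul_sum]
    apply Finset.sum_le_sum
    intro j _
    rw [col_mul, col_quad, hinv]
    calc (fun i => H i j) ⬝ᵥ ((A * Aᵀ)⁻¹ *ᵥ (fun i => H i j))
        ≤ (⨅ i, hP.1.eigenvalues i)⁻¹ * ((fun i => H i j) ⬝ᵥ (fun i => H i j)) :=
          inv_quad_le hP _
      _ ≤ c * ((fun i => H i j) ⬝ᵥ (fun i => H i j)) := by
          apply mul_le_mul_of_nonneg_right
          · exact le_max_right _ _
          · exact Finset.sum_nonneg fun i _ => mul_self_nonneg _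
  linarith

lemma mem_lower {m n k : ℕ} (X : Matrix (Fin m) (Fin n) ℝ)
    (W : Matrix (Fin m) (Fin k) ℝ) (S : Matrix (Fin k) (Fin n) ℝ) :
    ∀ r ∈ { r : ℝ | ∃ (G : Matrix (Fin m) (Fin k) ℝ) (H : Matrix (Fin k) (Fin n) ℝ),
      ¬(G = 0 ∧ H = 0) ∧
      r = D2J X W G S H / ((Gᵀ * G).trace + (Hᵀ * H).trace) },
    -(1 + ((W * S - X)ᵀ * (W * S - X)).trace) ≤ r := by
  rintro r ⟨G, H, hnz, rfl⟩
  have ha0 : 0 ≤ (Gᵀ * G).trace := trace_self_nonneg G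
  have hb0 : 0 ≤ (Hᵀ * H).trace := trace_self_nonneg H
  have hD : 0 < (Gᵀ * G).trace + (Hᵀ * H).trace := by
    rcases not_and_or.mp hnz with h | h
    · have := trace_self_pos G h; linarith
    · have := trace_self_pos H h; linarith
  rw [le_div_iff₀ hD]
  have := D2J_lower X W G S H
  nlinarith [trace_self_nonneg (W * S - X)]

lemma denom_pos {m n k : ℕ} {G : Matrix (Fin m) (Fin k) ℝ} {H : Matrix (Fin k) (Fin n) ℝ}
    (hnz : ¬(G = 0 ∧ H = 0)) : 0 < (Gᵀ * G).trace + (Hᵀ * H).trace := by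
  have ha0 : 0 ≤ (Gᵀ * G).trace := trace_self_nonneg G
  have hb0 : 0 ≤ (Hᵀ * H).trace := trace_self_nonneg H
  rcases not_and_or.mp hnz with h | h
  · have := trace_self_pos G h; linarith
  · have := trace_self_pos H h; linarith

/-- if (W,S) is a critical point with λ = λ_min(∇²J(W,S)) < 0, then
for invertible A, λ_min(∇²J(WA, A⁻¹S)) ≤ λ / max{λ_max(AAᵀ), λ_min(AAᵀ)⁻¹};
in particular (WA, A⁻¹S) is again a strict saddle. -/
theorem strict_saddle_orbit_bound {m n k : ℕ}
    (X : Matrix (Fin (m + 1)) (Fin (n + 1)) ℝ)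
    (W : Matrix (Fin (m + 1)) (Fin (k + 1)) ℝ)
    (S : Matrix (Fin (k + 1)) (Fin (n + 1)) ℝ)
    (hc1 : (W * S - X) * Sᵀ = 0) (hc2 : Wᵀ * (W * S - X) = 0)
    (A : Matrix (Fin (k + 1)) (Fin (k + 1)) ℝ) (hA : IsUnit A)
    (hM : (A * Aᵀ).IsHermitian)
    (hneg : lamMin X W S < 0) :
    lamMin X (W * A) (A⁻¹ * S)
        ≤ lamMin X W S
          / max (⨆ i, hM.eigenvalues i) ((⨅ i, hM.eigenvalues i)⁻¹) ∧
    lamMin X (W * A) (A⁻¹ * S) < 0 := by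
  classical
  set c := max (⨆ i, hM.eigenvalues i) ((⨅ i, hM.eigenvalues i)⁻¹) with hcdef
  have hP : (A * Aᵀ).PosDef := posdef_AAT A hA hM
  have hcpos : 0 < c := by
    have h0 : 0 < hM.eigenvalues 0 := hP.eigenvalues_pos 0
    have h1 : hM.eigenvalues 0 ≤ ⨆ i, hM.eigenvalues i :=
      le_ciSup (Set.Finite.bddAbove (Set.finite_range _)) 0
    exact lt_of_lt_of_le h0 (h1.trans (le_max_left _ _))
  have hdet : IsUnit A.det := (Matrix.isUnit_iff_isUnit_det A).mp hA
  have hAinv : A * A⁻¹ = 1 := Matrix.mul_nonsing_inv A hdet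
  have hAinv' : A⁻¹ * A = 1 := Matrix.nonsing_inv_mul A hdet
  set T := { r : ℝ | ∃ (G : Matrix (Fin (m+1)) (Fin (k+1)) ℝ)
      (H : Matrix (Fin (k+1)) (Fin (n+1)) ℝ), ¬(G = 0 ∧ H = 0) ∧
      r = D2J X W G S H / ((Gᵀ * G).trace + (Hᵀ * H).trace) } with hTdef
  set T' := { r : ℝ | ∃ (G : Matrix (Fin (m+1)) (Fin (k+1)) ℝ)
      (H : Matrix (Fin (k+1)) (Fin (n+1)) ℝ), ¬(G = 0 ∧ H = 0) ∧
      r = D2J X (W * A) G (A⁻¹ * S) H / ((Gᵀ * G).trace + (Hᵀ * H).trace) } with hT'def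
  have hlam : lamMin X W S = sInf T := rfl
  have hlam' : lamMin X (W * A) (A⁻¹ * S) = sInf T' := rfl
  have hbdd' : BddBelow T' :=
    ⟨-(1 + (((W * A) * (A⁻¹ * S) - X)ᵀ * ((W * A) * (A⁻¹ * S) - X)).trace),
      fun r hr => mem_lower X (W * A) (A⁻¹ * S) r hr⟩
  have hTne : T.Nonempty := by
    refine ⟨_, 0, fun _ _ => 1, ?_, rfl⟩
    rintro ⟨-, h⟩
    exact one_ne_zero (congrFun (congrFun h 0) 0)
  have hmain : sInf T' ≤ sInf T / c := by
    by_contra hcon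
    push_neg at hcon
    set δ := sInf T' - sInf T / c with hδdef
    have hδpos : 0 < δ := by simp [hδdef]; linarith
    have hlt : sInf T < sInf T + min (c * δ) (-(sInf T)) := by
      have : 0 < min (c * δ) (-(sInf T)) := by
        apply lt_min (mul_pos hcpos hδpos)
        rw [hlam] at hneg; linarith
      linarith
    obtain ⟨r, hrT, hr⟩ := exists_lt_of_csInf_lt hTne hlt
    obtain ⟨G, H, hnz, hreq⟩ := hrT
    set a := (Gᵀ * G).trace
    set b := (Hᵀ * H).trace
    have hD : 0 < a + b := denom_pos hnz
    have hrneg : r < 0 := by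
      have : min (c * δ) (-(sInf T)) ≤ -(sInf T) := min_le_right _ _
      linarith
    set N := D2J X W G S H with hNdef
    have hNeq : N = r * (a + b) := by
      rw [hreq]; field_simp
    have hNneg : N < 0 := by
      rw [hNeq]; exact mul_neg_of_neg_of_pos hrneg hD
    -- transformed direction
    set G' := G * A with hG'def
    set H' := A⁻¹ * H with hH'def
    have hnz' : ¬(G' = 0 ∧ H' = 0) := by
      rintro ⟨hg, hh⟩
      apply hnz
      constructor
      · have : G' * A⁻¹ = G := by
          rw [hG'def, Matrix.mul_assoc, hAinv, Matrix.mul_one]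
        rw [← this, hg, Matrix.zero_mul]
      · have : A * H' = H := by
          rw [hH'def, ← Matrix.mul_assoc, hAinv, Matrix.one_mul]
        rw [← this, hh, Matrix.mul_zero]
    have hNinv : D2J X (W * A) G' (A⁻¹ * S) H' = N := by
      rw [hG'def, hH'def, hNdef]
      exact D2J_invariant X W G S H A hA
    set D' := (G'ᵀ * G').trace + (H'ᵀ * H').trace with hD'def
    have hD'pos : 0 < D' := denom_pos hnz'
    have hD'le : D' ≤ c * (a + b) := denom_bound A hA hM G H
    have hr'mem : N / D' ∈ T' := ⟨G', H', hnz', by rw [hNinv]⟩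
    have h1 : sInf T' ≤ N / D' := csInf_le hbdd' hr'mem
    have h2 : N / D' ≤ N / (c * (a + b)) := by
      rw [div_le_div_iff₀ hD'pos (mul_pos hcpos hD)]
      exact mul_le_mul_of_nonpos_left hD'le hNneg.le
    have h3 : N / (c * (a + b)) = r / c := by
      rw [hreq, hNdef, div_div, mul_comm c (a + b)]
    have h4 : r / c < sInf T / c + δ := by
      have hrr : r < sInf T + c * δ := by
        have : min (c * δ) (-(sInf T)) ≤ c * δ := min_le_left _ _
        linarith
      rw [div_lt_iff₀ hcpos]
      calc r < sInf T + c * δ := hrr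
        _ = (sInf T / c + δ) * c := by field_simp
    have : sInf T' < sInf T' := by
      calc sInf T' ≤ N / D' := h1
        _ ≤ N / (c * (a + b)) := h2
        _ = r / c := h3
        _ < sInf T / c + δ := h4
        _ = sInf T' := by rw [hδdef]; ring
    exact lt_irrefl _ this
  constructor
  · rw [hlam, hlam']; exact hmain
  · rw [hlam']
    apply lt_of_le_of_lt hmain
    rw [← hlam]
    exact div_neg_of_neg_of_pos hneg hcpos
end

section
/- Let X = UΣVᵀ be a full SVD with nonzero singular values σ₁ ≥ … ≥ σ_r > 0, let Ū ∈ ℝ^{m×q} consist of q left singular vectors of X with XXᵀŪ = ŪΛ², Λ diagonal, let V̄ be the matching right singular vectors (ŪᵀX = ΛV̄ᵀ), V₀ the right singular vectors for zero singular values, and C₀ ∈ ℝ^{(n−r)×(k−q)}. Then the canonical point (W_c, S_c) = ([Ū 0], [ΛV̄ᵀ; C₀ᵀV₀ᵀ]) is a critical point of J with J(W_c,S_c) = (1/2)(Σᵢ₌₁ʳ σᵢ² − Σⱼ₌₁^q λⱼ²). -/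
open Matrix

/-- the canonical point (W_c, S_c) = ([Ū 0], [ΛV̄ᵀ; C₀ᵀV₀ᵀ]) is a
critical point of J with value (1/2)(Σᵢσᵢ² − Σⱼλⱼ²); here Σᵢσᵢ² = ‖X‖_F² = tr(XᵀX)
and Σⱼλⱼ² = tr(ΛᵀΛ). -/
theorem canonical_point_critical {m n k q s p : ℕ}
    (X : Matrix (Fin m) (Fin n) ℝ)
    (Ubar : Matrix (Fin m) (Fin q) ℝ) (Vbar : Matrix (Fin n) (Fin q) ℝ)
    (Lam : Matrix (Fin q) (Fin q) ℝ) (V0 : Matrix (Fin n) (Fin p) ℝ)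
    (C0 : Matrix (Fin p) (Fin s) ℝ)
    (hLamDiag : Lam.IsDiag) (hLamNonneg : ∀ i, 0 ≤ Lam i i)
    (hU : Ubarᵀ * Ubar = 1) (hV : Vbarᵀ * Vbar = 1)
    (hXV : X * Vbar = Ubar * Lam) (hXtU : Xᵀ * Ubar = Vbar * Lam)
    (hXV0 : X * V0 = 0) (hVV0 : Vbarᵀ * V0 = 0) :
    letI Wc : Matrix (Fin m) (Fin q ⊕ Fin s) ℝ := fromCols Ubar 0
    letI Sc : Matrix (Fin q ⊕ Fin s) (Fin n) ℝ := fromRows (Lam * Vbarᵀ) (C0ᵀ * V0ᵀ)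
    (Wc * Sc - X) * Scᵀ = 0 ∧
    Wcᵀ * (Wc * Sc - X) = 0 ∧
    (1 / 2) * ((X - Wc * Sc)ᵀ * (X - Wc * Sc)).trace
      = (1 / 2) * ((Xᵀ * X).trace - (Lamᵀ * Lam).trace) := by
  have hsym : Lamᵀ = Lam := hLamDiag.isSymm
  set A : Matrix (Fin m) (Fin n) ℝ := Ubar * Lam * Vbarᵀ with hA
  have hWS : fromCols Ubar (0 : Matrix (Fin m) (Fin s) ℝ) *
      fromRows (Lam * Vbarᵀ) (C0ᵀ * V0ᵀ) = A := by
    simp only [fromCols_mul_fromRows, Matrix.zero_mul, add_zero, hA, Matrix.mul_assoc]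
  -- (A - X) * Vbar = 0
  have hAV : A * Vbar = Ubar * Lam := by
    rw [hA, Matrix.mul_assoc, hV, Matrix.mul_one]
  have hAV0 : A * V0 = 0 := by
    rw [hA, Matrix.mul_assoc, hVV0, Matrix.mul_zero]
  have hEV : (A - X) * Vbar = 0 := by
    rw [Matrix.sub_mul, hAV, hXV, sub_self]
  have hEV0 : (A - X) * V0 = 0 := by
    rw [Matrix.sub_mul, hAV0, hXV0, sub_self]
  have hUA : Ubarᵀ * A = Lam * Vbarᵀ := by
    rw [hA, ← Matrix.mul_assoc, ← Matrix.mul_assoc, hU, Matrix.one_mul]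
  have hUX : Ubarᵀ * X = Lam * Vbarᵀ := by
    have := congrArg Matrix.transpose hXtU
    rw [Matrix.transpose_mul, Matrix.transpose_mul, Matrix.transpose_transpose, hsym] at this
    exact this
  have hUE : Ubarᵀ * (A - X) = 0 := by
    rw [Matrix.mul_sub, hUA, hUX, sub_self]
  refine ⟨?_, ?_, ?_⟩
  · -- (Wc * Sc - X) * Scᵀ = 0
    rw [hWS]
    simp only [transpose_fromRows, Matrix.transpose_mul, Matrix.transpose_transpose,
      mul_fromCols]
    rw [← Matrix.mul_assoc, hEV, ← Matrix.mul_assoc, hEV0, Matrix.zero_mul,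
      Matrix.zero_mul, fromCols_zero]
  · -- Wcᵀ * (Wc * Sc - X) = 0
    rw [hWS]
    simp only [transpose_fromCols, fromRows_mul, hUE, Matrix.transpose_zero,
      Matrix.zero_mul, fromRows_zero]
  · -- trace identity
    rw [hWS]
    have hVLLV : (Vbar * Lam * Lam * Vbarᵀ).trace = (Lamᵀ * Lam).trace := by
      rw [Matrix.trace_mul_comm, ← Matrix.mul_assoc, ← Matrix.mul_assoc, hV,
        Matrix.one_mul, hsym]
    have hXA : Xᵀ * A = Vbar * Lam * Lam * Vbarᵀ := by
      rw [hA, ← Matrix.mul_assoc, ← Matrix.mul_assoc, hXtU]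
    have hAt : Aᵀ = Vbar * Lam * Ubarᵀ := by
      rw [hA, Matrix.transpose_mul, Matrix.transpose_mul, Matrix.transpose_transpose, hsym,
        Matrix.mul_assoc]
    have hUc : Ubarᵀ * (Ubar * (Lam * Vbarᵀ)) = Lam * Vbarᵀ := by
      rw [← Matrix.mul_assoc, hU, Matrix.one_mul]
    have hAA : Aᵀ * A = Vbar * Lam * Lam * Vbarᵀ := by
      rw [hAt, hA]
      simp only [Matrix.mul_assoc]
      rw [hUc]
    have hAX : (Aᵀ * X).trace = (Lamᵀ * Lam).trace := by
      rw [← Matrix.trace_transpose (Aᵀ * X), Matrix.transpose_mul,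
        Matrix.transpose_transpose, hXA, hVLLV]
    have expand : (X - A)ᵀ * (X - A) = Xᵀ * X - Xᵀ * A - Aᵀ * X + Aᵀ * A := by
      rw [Matrix.transpose_sub, Matrix.sub_mul, Matrix.mul_sub, Matrix.mul_sub]

      abel
    rw [expand, Matrix.trace_add, Matrix.trace_sub, Matrix.trace_sub, hXA, hVLLV, hAX, hAA,
      hVLLV]
    ring
end

section
/- Let (W,S) = (0, C₀ᵀV₀ᵀ) where V₀ᵀX ᵀ = 0 (columns of V₀ are right singular vectors of X for singular value 0). Write C₀ᵀC₀ = ZΩZᵀ with Z orthogonal and Ω diagonal with entries ω₁ ≥ … ≥ ω_k ≥ 0. Then (W,S) is a critical point of J and λ_min(∇²J(W,S)) = ω_k/2 − √(σ₁² + (ω_k/2)²) < 0, where σ₁ is the largest singular value of X ≠ 0. -/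
open Matrix

lemma spec_bound {m n : ℕ} (X : Matrix (Fin m) (Fin n) ℝ) (sigma1 : ℝ) (hs : 0 < sigma1)
    (u : Fin m → ℝ) (v : Fin n → ℝ)
    (hu : ∑ i, u i ^ 2 = 1) (hv : ∑ i, v i ^ 2 = 1)
    (hXv : X *ᵥ v = sigma1 • u) (hXtu : Xᵀ *ᵥ u = sigma1 • v)
    (hmax : ∀ (s : ℝ) (u' : Fin m → ℝ) (v' : Fin n → ℝ), u' ≠ 0 →
      X *ᵥ v' = s • u' → Xᵀ *ᵥ u' = s • v' → s ≤ sigma1) :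
    ∀ w : Fin n → ℝ, (X *ᵥ w) ⬝ᵥ (X *ᵥ w) ≤ sigma1 ^ 2 * (w ⬝ᵥ w) := by
  classical
  set f : (Fin n → ℝ) → ℝ := fun w => (X *ᵥ w) ⬝ᵥ (X *ᵥ w) with hf
  set Sp : Set (Fin n → ℝ) := {w | w ⬝ᵥ w = 1} with hSp
  have hdot_cont : Continuous fun w : Fin n → ℝ => w ⬝ᵥ w := by
    unfold dotProduct
    exact continuous_finset_sum _ fun i _ => (continuous_apply i).mul (continuous_apply i)
  have hmv_cont : ∀ i, Continuous fun w : Fin n → ℝ => (X *ᵥ w) i := by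
    intro i
    simp only [Matrix.mulVec, dotProduct]
    exact continuous_finset_sum _ fun j _ => continuous_const.mul (continuous_apply j)
  have hf_cont : Continuous f := by
    simp only [hf, dotProduct]
    exact continuous_finset_sum _ fun i _ => (hmv_cont i).mul (hmv_cont i)
  have hclosed : IsClosed Sp := isClosed_eq hdot_cont continuous_const
  have hsub : Sp ⊆ Metric.closedBall (0 : Fin n → ℝ) 1 := by
    intro w hw
    rw [Metric.mem_closedBall, dist_zero_right]
    rw [pi_norm_le_iff_of_nonneg zero_le_one]
    intro i
    rw [Real.norm_eq_abs, abs_le]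
    have h1 : w i * w i ≤ w ⬝ᵥ w := by
      unfold dotProduct
      exact Finset.single_le_sum (f := fun j => w j * w j)
        (fun j _ => mul_self_nonneg _) (Finset.mem_univ i)
    have h2 : w i * w i ≤ 1 := by rw [hw] at h1; exact h1
    constructor <;> nlinarith
  have hcpt : IsCompact Sp :=
    (isCompact_closedBall (0 : Fin n → ℝ) 1).of_isClosed_subset hclosed hsub
  have hvSp : v ∈ Sp := by
    simp only [hSp, Set.mem_setOf_eq, dotProduct]
    simpa [sq] using hv
  obtain ⟨w0, hw0Sp, hw0max⟩ := hcpt.exists_isMaxOn ⟨v, hvSp⟩ hf_cont.continuousOn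
  set mu : ℝ := f w0 with hmu
  -- mu ≥ sigma1^2
  have hfv : f v = sigma1 ^ 2 := by
    simp only [hf, hXv, smul_dotProduct, dotProduct_smul, smul_eq_mul]
    have : u ⬝ᵥ u = 1 := by unfold dotProduct; simpa [sq] using hu
    rw [this]; ring
  have hmu_ge : sigma1 ^ 2 ≤ mu := by
    have h := hw0max hvSp
    simp only [Set.mem_setOf_eq, hfv] at h
    exact h
  have hmu_pos : 0 < mu := lt_of_lt_of_le (by positivity) hmu_ge
  -- PSD of mu * (x⬝x) - f x
  have hPSD : ∀ x : Fin n → ℝ, f x ≤ mu * (x ⬝ᵥ x) := by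
    intro x
    by_cases hx : x ⬝ᵥ x = 0
    · have hx0 : x = 0 := by
        funext i
        have h1 : ∀ j ∈ Finset.univ, (0:ℝ) ≤ x j * x j := fun j _ => mul_self_nonneg _
        have h2 := (Finset.sum_eq_zero_iff_of_nonneg h1).mp hx i (Finset.mem_univ i)
        simp only [Pi.zero_apply]
        nlinarith [h2]
      subst hx0
      simp [hf]
    · have hxpos : 0 < x ⬝ᵥ x := by
        rcases lt_or_eq_of_le (Finset.sum_nonneg fun j _ => mul_self_nonneg (x j)) with h | h
        · exact h
        · exact absurd h.symm hx
      set c := x ⬝ᵥ x with hc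
      set t := (Real.sqrt c)⁻¹ with ht
      have hsc : Real.sqrt c > 0 := Real.sqrt_pos.mpr hxpos
      have hwSp : (t • x) ∈ Sp := by
        simp only [hSp, Set.mem_setOf_eq, smul_dotProduct, dotProduct_smul, smul_eq_mul]
        rw [← mul_assoc]
        rw [← hc]
        have : t * t * c = 1 := by
          rw [ht]
          rw [← Real.sqrt_mul_self hxpos.le] 
          field_simp
          rw [Real.sq_sqrt (Real.sqrt_nonneg _)]
        exact this
      have hle := hw0max hwSp
      simp only [Set.mem_setOf_eq] at hle
      have hft : f (t • x) = t * t * f x := by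
        simp only [hf, Matrix.mulVec_smul, smul_dotProduct, dotProduct_smul, smul_eq_mul]
        ring
      rw [hft] at hle
      have htc : t * t * c = 1 := by
        rw [ht, ← Real.sqrt_mul_self hxpos.le]; field_simp
        rw [Real.sq_sqrt (Real.sqrt_nonneg _)]
      -- t*t*f x ≤ mu, so f x ≤ mu * c
      have hcpos := hxpos
      calc f x = (t * t * f x) * c := by
            rw [show (t * t * f x) * c = (t*t*c) * f x by ring, htc]; ring
        _ ≤ mu * c := by
            apply mul_le_mul_of_nonneg_right hle hcpos.le
  -- bilinear form
  set Bq : (Fin n → ℝ) → (Fin n → ℝ) → ℝ :=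
    fun x y => mu * (x ⬝ᵥ y) - (X *ᵥ x) ⬝ᵥ (X *ᵥ y) with hBq
  have hBq_symm : ∀ x y, Bq x y = Bq y x := by
    intro x y; simp only [hBq, dotProduct_comm]
  have hBq_nonneg : ∀ x, 0 ≤ Bq x x := fun x => by
    simp only [hBq]; have := hPSD x; simp only [hf] at this; linarith
  have hBw0 : Bq w0 w0 = 0 := by
    simp only [hBq]
    have : w0 ⬝ᵥ w0 = 1 := hw0Sp
    rw [this, hmu, hf]; ring
  have hBd : ∀ d, Bq d w0 = 0 := by
    intro d
    set c1 := Bq d w0 with hc1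
    set c2 := Bq d d with hc2
    have key : ∀ t : ℝ, 0 ≤ 2 * t * c1 + t ^ 2 * c2 := by
      intro t
      have h := hBq_nonneg (w0 + t • d)
      have hexp : Bq (w0 + t • d) (w0 + t • d)
          = Bq w0 w0 + 2 * t * c1 + t ^ 2 * c2 := by
        simp only [hBq, hc1, hc2, Matrix.mulVec_add, Matrix.mulVec_smul,
          add_dotProduct, dotProduct_add, smul_dotProduct, dotProduct_smul,
          smul_eq_mul, dotProduct_comm w0 d]
        have : (X *ᵥ w0) ⬝ᵥ (X *ᵥ d) = (X *ᵥ d) ⬝ᵥ (X *ᵥ w0) := dotProduct_comm _ _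
        rw [this]; ring
      rw [hexp, hBw0] at h; linarith
    have hc2nn : 0 ≤ c2 := hBq_nonneg d
    have h := key (-c1 / (c2 + 1))
    have hc2p : (0:ℝ) < c2 + 1 := by linarith
    have e : (2 * (-c1/(c2+1)) * c1 + (-c1/(c2+1))^2 * c2) * (c2+1)^2
        = -(c1^2 * (c2 + 2)) := by
      field_simp
      ring
    have h2 : 0 ≤ -(c1^2 * (c2+2)) := by
      rw [← e]
      exact mul_nonneg h (by positivity)
    have hsq : c1 ^ 2 = 0 := by nlinarith [sq_nonneg c1]
    exact pow_eq_zero_iff (two_ne_zero) |>.mp hsq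
  -- eigen equation
  have heig : Xᵀ *ᵥ (X *ᵥ w0) = mu • w0 := by
    have hr : ∀ d, d ⬝ᵥ (mu • w0 - Xᵀ *ᵥ (X *ᵥ w0)) = 0 := by
      intro d
      have := hBd d
      simp only [hBq] at this
      have hconv : (X *ᵥ d) ⬝ᵥ (X *ᵥ w0) = d ⬝ᵥ (Xᵀ *ᵥ (X *ᵥ w0)) := by
        rw [dotProduct_comm, dotProduct_mulVec]
        rw [dotProduct_comm]
        congr 1
        rw [← Matrix.mulVec_transpose]
      rw [hconv] at this
      simp only [dotProduct_sub, dotProduct_smul, smul_eq_mul]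
      linarith [this]
    have h0 := hr (mu • w0 - Xᵀ *ᵥ (X *ᵥ w0))
    have : mu • w0 - Xᵀ *ᵥ (X *ᵥ w0) = 0 := by
      by_contra hne
      have : ∃ i, (mu • w0 - Xᵀ *ᵥ (X *ᵥ w0)) i ≠ 0 := by
        by_contra hall
        push_neg at hall
        exact hne (funext hall)
      obtain ⟨i, hi⟩ := this
      have hpos : 0 < (mu • w0 - Xᵀ *ᵥ (X *ᵥ w0)) ⬝ᵥ (mu • w0 - Xᵀ *ᵥ (X *ᵥ w0)) := by
        unfold dotProduct
        apply Finset.sum_pos' (fun j _ => mul_self_nonneg _)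
        exact ⟨i, Finset.mem_univ i, mul_self_pos.mpr hi⟩
      rw [h0] at hpos; exact lt_irrefl 0 hpos
    exact (sub_eq_zero.mp this).symm
  -- singular pair from eigenvector
  set sig := Real.sqrt mu with hsig
  have hsigpos : 0 < sig := Real.sqrt_pos.mpr hmu_pos
  have hsig2 : sig ^ 2 = mu := Real.sq_sqrt hmu_pos.le
  set u' : Fin m → ℝ := sig⁻¹ • (X *ᵥ w0) with hu'
  have hXw0 : X *ᵥ w0 = sig • u' := by
    rw [hu', smul_smul, mul_inv_cancel₀ hsigpos.ne', one_smul]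
  have hXtu' : Xᵀ *ᵥ u' = sig • w0 := by
    rw [hu', Matrix.mulVec_smul, heig, smul_smul]
    congr 1
    rw [← hsig2]
    field_simp
  have hu'ne : u' ≠ 0 := by
    intro h0
    rw [h0, Matrix.mulVec_zero] at hXtu'
    have hw00 : w0 = 0 := by
      have := hXtu'.symm
      rwa [smul_eq_zero, or_iff_right hsigpos.ne'] at this
    have : w0 ⬝ᵥ w0 = 1 := hw0Sp
    rw [hw00] at this
    simp at this
  have hsigle : sig ≤ sigma1 := hmax sig u' w0 hu'ne hXw0 hXtu'
  have hmule : mu ≤ sigma1 ^ 2 := by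
    rw [← hsig2]
    exact pow_le_pow_left₀ hsigpos.le hsigle 2
  intro w
  have h1 := hPSD w
  simp only [hf] at h1
  have h2 : 0 ≤ w ⬝ᵥ w := Finset.sum_nonneg fun j _ => mul_self_nonneg (w j)
  nlinarith [h1, mul_le_mul_of_nonneg_right hmule h2]

-- trace of Aᵀ * A as sum of squares
lemma traceSqSum {a b : ℕ} (A : Matrix (Fin a) (Fin b) ℝ) :
    (Aᵀ * A).trace = ∑ j, ∑ i, A i j ^ 2 := by
  simp [Matrix.trace, Matrix.mul_apply, Matrix.diag, sq]

lemma trace_mul_transpose_sum {a b : ℕ} (N G : Matrix (Fin a) (Fin b) ℝ) :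
    (N * Gᵀ).trace = ∑ i, ∑ j, N i j * G i j := by
  simp [Matrix.trace, Matrix.mul_apply, Matrix.diag]

lemma trace_mul_diag {q : ℕ} (M D : Matrix (Fin q) (Fin q) ℝ) (hD : D.IsDiag) :
    (M * D).trace = ∑ j, M j j * D j j := by
  simp only [Matrix.trace, Matrix.mul_apply, Matrix.diag]
  refine Finset.sum_congr rfl fun j _ => ?_
  rw [Finset.sum_eq_single j]
  · intro l _ hl
    rw [hD hl, mul_zero]
  · intro h; exact absurd (Finset.mem_univ j) h

lemma D2J_zeroW {m n k : ℕ} (X : Matrix (Fin m) (Fin n) ℝ)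
    (G : Matrix (Fin m) (Fin k) ℝ) (S H : Matrix (Fin k) (Fin n) ℝ) :
    D2J X 0 G S H = ((G * S)ᵀ * (G * S)).trace - 2 * (Hᵀ * Gᵀ * X).trace := by
  unfold D2J
  simp [Matrix.trace_add, Matrix.mul_neg, Matrix.trace_neg]
  ring

lemma sum_prod_eq {a b : ℕ} (f : Fin a → ℝ) (g : Fin b → ℝ) :
    ∑ j : Fin b, ∑ i : Fin a, f i * g j = (∑ i, f i) * (∑ j, g j) := by
  simp_rw [← Finset.sum_mul]
  exact (Finset.mul_sum _ _ _).symm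

lemma matrix_eq_zero_of_trace {a b : ℕ} (G : Matrix (Fin a) (Fin b) ℝ)
    (h : (Gᵀ * G).trace = 0) : G = 0 := by
  rw [traceSqSum] at h
  have h1 : ∀ j ∈ (Finset.univ : Finset (Fin b)), (0:ℝ) ≤ ∑ i, G i j ^ 2 :=
    fun j _ => Finset.sum_nonneg fun i _ => sq_nonneg _
  funext i j
  have h2 := (Finset.sum_eq_zero_iff_of_nonneg h1).mp h j (Finset.mem_univ j)
  have h3 := (Finset.sum_eq_zero_iff_of_nonneg
    (fun i _ => sq_nonneg (G i j))).mp h2 i (Finset.mem_univ i)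
  simpa using pow_eq_zero_iff two_ne_zero |>.mp h3

lemma trace_nonneg' {a b : ℕ} (G : Matrix (Fin a) (Fin b) ℝ) :
    0 ≤ (Gᵀ * G).trace := by
  rw [traceSqSum]
  positivity

set_option maxHeartbeats 1600000 in
/-- (0, C₀ᵀV₀ᵀ) is a critical point of J and
λ_min(∇²J) = ω_k/2 − √(σ₁² + (ω_k/2)²) < 0, where σ₁ > 0 is the largest singular
value of X and ω_k the least eigenvalue of C₀ᵀC₀. -/
theorem zero_critical_point_lamMin {m n k p : ℕ}
    (X : Matrix (Fin m) (Fin n) ℝ)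
    (V0 : Matrix (Fin n) (Fin p) ℝ) (C0 : Matrix (Fin p) (Fin (k + 1)) ℝ)
    (hXV0 : X * V0 = 0) (hV0 : V0ᵀ * V0 = 1)
    (Z Om : Matrix (Fin (k + 1)) (Fin (k + 1)) ℝ)
    (hZ : Zᵀ * Z = 1) (hOmDiag : Om.IsDiag) (hOmNonneg : ∀ i, 0 ≤ Om i i)
    (hOmDec : ∀ i j : Fin (k + 1), i ≤ j → Om j j ≤ Om i i)
    (hC : C0ᵀ * C0 = Z * Om * Zᵀ)
    (sigma1 : ℝ) (hs : 0 < sigma1)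
    (u : Fin m → ℝ) (v : Fin n → ℝ)
    (hu : ∑ i, u i ^ 2 = 1) (hv : ∑ i, v i ^ 2 = 1)
    (hXv : X *ᵥ v = sigma1 • u) (hXtu : Xᵀ *ᵥ u = sigma1 • v)
    (hmax : ∀ (s : ℝ) (u' : Fin m → ℝ) (v' : Fin n → ℝ), u' ≠ 0 →
      X *ᵥ v' = s • u' → Xᵀ *ᵥ u' = s • v' → s ≤ sigma1) :
    letI W : Matrix (Fin m) (Fin (k + 1)) ℝ := 0
    letI S : Matrix (Fin (k + 1)) (Fin n) ℝ := C0ᵀ * V0ᵀ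
    letI om : ℝ := Om (Fin.last k) (Fin.last k)
    (W * S - X) * Sᵀ = 0 ∧ Wᵀ * (W * S - X) = 0 ∧
    lamMin X W S = om / 2 - Real.sqrt (sigma1 ^ 2 + (om / 2) ^ 2) ∧
    lamMin X W S < 0 := by
  classical
  set W : Matrix (Fin m) (Fin (k+1)) ℝ := 0 with hWdef
  set S : Matrix (Fin (k+1)) (Fin n) ℝ := C0ᵀ * V0ᵀ with hSdef
  set om : ℝ := Om (Fin.last k) (Fin.last k) with homdef
  have spec := spec_bound X sigma1 hs u v hu hv hXv hXtu hmax
  set lam : ℝ := om / 2 - Real.sqrt (sigma1 ^ 2 + (om / 2) ^ 2) with hlamdef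
  have hom0 : 0 ≤ om := hOmNonneg _
  have hsqrt2 : Real.sqrt (sigma1 ^ 2 + (om / 2) ^ 2) ^ 2 = sigma1 ^ 2 + (om / 2) ^ 2 :=
    Real.sq_sqrt (by positivity)
  have hlamneg : lam < 0 := by
    have h1 : om / 2 ≤ |om / 2| := le_abs_self _
    have h2 : |om / 2| = Real.sqrt ((om / 2) ^ 2) := (Real.sqrt_sq_eq_abs _).symm
    have h3 : Real.sqrt ((om / 2) ^ 2) < Real.sqrt (sigma1 ^ 2 + (om / 2) ^ 2) :=
      Real.sqrt_lt_sqrt (by positivity) (by nlinarith)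
    rw [hlamdef]; linarith
  have hlam2 : lam ^ 2 = om * lam + sigma1 ^ 2 := by
    rw [hlamdef]; nlinarith [hsqrt2]
  -- critical point
  have hSt : Sᵀ = V0 * C0 := by
    show (C0ᵀ * V0ᵀ)ᵀ = V0 * C0
    rw [Matrix.transpose_mul, Matrix.transpose_transpose, Matrix.transpose_transpose]
  have crit1 : (W * S - X) * Sᵀ = 0 := by
    show ((0 : Matrix (Fin m) (Fin (k+1)) ℝ) * S - X) * Sᵀ = 0
    rw [Matrix.zero_mul, zero_sub, hSt, Matrix.neg_mul, ← Matrix.mul_assoc, hXV0,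
      Matrix.zero_mul, neg_zero]
  have crit2 : Wᵀ * (W * S - X) = 0 := by
    show (0 : Matrix (Fin m) (Fin (k+1)) ℝ)ᵀ * ((0 : Matrix (Fin m) (Fin (k+1)) ℝ) * S - X) = 0
    rw [Matrix.transpose_zero, Matrix.zero_mul]
  have hSS : S * Sᵀ = Z * Om * Zᵀ := by
    show (C0ᵀ * V0ᵀ) * (C0ᵀ * V0ᵀ)ᵀ = Z * Om * Zᵀ
    rw [hSt]
    rw [show C0ᵀ * V0ᵀ * (V0 * C0) = C0ᵀ * (V0ᵀ * V0) * C0 by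
      rw [Matrix.mul_assoc, Matrix.mul_assoc, Matrix.mul_assoc]]
    rw [hV0, Matrix.mul_one, hC]
  have hZZt : Z * Zᵀ = 1 := mul_eq_one_comm.mp hZ
  -- lower bound
  have hlower : ∀ (G : Matrix (Fin m) (Fin (k+1)) ℝ) (H : Matrix (Fin (k+1)) (Fin n) ℝ),
      lam * ((Gᵀ * G).trace + (Hᵀ * H).trace) ≤ D2J X 0 G S H := by
    intro G H
    rw [D2J_zeroW]
    set A := (Gᵀ * G).trace with hAdef
    set B := (Hᵀ * H).trace with hBdef
    have hA0 : 0 ≤ A := trace_nonneg' G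
    have hB0 : 0 ≤ B := trace_nonneg' H
    -- Q1 ≥ om * A
    have e0 : (G * S) * (G * S)ᵀ = (G * Z) * Om * (G * Z)ᵀ := by
      have h := congrArg (fun M => G * M * Gᵀ) hSS
      simp only [Matrix.mul_assoc] at h
      simp only [Matrix.transpose_mul, Matrix.mul_assoc]
      exact h
    have e1 : ((G * S)ᵀ * (G * S)).trace = (((G * Z)ᵀ * (G * Z)) * Om).trace := by
      calc ((G * S)ᵀ * (G * S)).trace = ((G * S) * (G * S)ᵀ).trace := trace_mul_comm _ _
        _ = ((G * Z) * Om * (G * Z)ᵀ).trace := by rw [e0]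
        _ = ((G * Z)ᵀ * ((G * Z) * Om)).trace := trace_mul_comm _ _
        _ = (((G * Z)ᵀ * (G * Z)) * Om).trace := by
              rw [Matrix.mul_assoc ((G * Z)ᵀ) (G * Z) Om]
    have htrGZ : ((G * Z)ᵀ * (G * Z)).trace = A := by
      rw [trace_mul_comm]
      have e : (G * Z) * (G * Z)ᵀ = G * Gᵀ := by
        rw [Matrix.transpose_mul]
        calc G * Z * (Zᵀ * Gᵀ) = G * (Z * Zᵀ) * Gᵀ := by
              rw [Matrix.mul_assoc, Matrix.mul_assoc, Matrix.mul_assoc]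
          _ = G * Gᵀ := by rw [hZZt, Matrix.mul_one]
      rw [e, trace_mul_comm]
    have hQ1 : om * A ≤ ((G * S)ᵀ * (G * S)).trace := by
      rw [e1, trace_mul_diag _ _ hOmDiag]
      have htr : ((G * Z)ᵀ * (G * Z)).trace = ∑ j, ((G * Z)ᵀ * (G * Z)) j j := by
        simp [Matrix.trace, Matrix.diag]
      have : om * A = ∑ j, om * ((G * Z)ᵀ * (G * Z)) j j := by
        rw [← Finset.mul_sum, ← htr, htrGZ]
      rw [this]
      refine Finset.sum_le_sum fun j _ => ?_
      have hnn : 0 ≤ ((G * Z)ᵀ * (G * Z)) j j := by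
        rw [Matrix.mul_apply]
        exact Finset.sum_nonneg fun l _ => by
          simp only [Matrix.transpose_apply]; exact mul_self_nonneg _
      have hom : om ≤ Om j j := hOmDec j (Fin.last k) (Fin.le_last j)
      calc om * ((G * Z)ᵀ * (G * Z)) j j = ((G * Z)ᵀ * (G * Z)) j j * om := mul_comm _ _
        _ ≤ ((G * Z)ᵀ * (G * Z)) j j * Om j j := mul_le_mul_of_nonneg_left hom hnn
    -- T bound
    set T := (Hᵀ * Gᵀ * X).trace with hTdef
    have e2 : T = ((X * Hᵀ) * Gᵀ).trace := by
      rw [hTdef, trace_mul_comm, Matrix.mul_assoc]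
    have hT : T ^ 2 ≤ sigma1 ^ 2 * A * B := by
      rw [e2, trace_mul_transpose_sum]
      have hflat : (∑ i, ∑ j, (X * Hᵀ) i j * G i j)
          = ∑ q : Fin m × Fin (k+1), (X * Hᵀ) q.1 q.2 * G q.1 q.2 := by
        rw [← Finset.univ_product_univ, Finset.sum_product]
      rw [hflat]
      have CS := Finset.sum_mul_sq_le_sq_mul_sq Finset.univ
        (fun q : Fin m × Fin (k+1) => (X * Hᵀ) q.1 q.2) (fun q => G q.1 q.2)
      have hXH : ∑ q : Fin m × Fin (k+1), (X * Hᵀ) q.1 q.2 ^ 2 ≤ sigma1 ^ 2 * B := by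
        rw [← Finset.univ_product_univ, Finset.sum_product, Finset.sum_comm]
        have hrow : ∀ j : Fin (k+1), ∑ i, (X * Hᵀ) i j ^ 2
            = (X *ᵥ (fun l => H j l)) ⬝ᵥ (X *ᵥ (fun l => H j l)) := by
          intro j
          simp [Matrix.mul_apply, Matrix.mulVec, dotProduct, sq]
        calc ∑ j, ∑ i, (X * Hᵀ) i j ^ 2
            = ∑ j : Fin (k+1), (X *ᵥ fun l => H j l) ⬝ᵥ (X *ᵥ fun l => H j l) :=
              Finset.sum_congr rfl fun j _ => hrow j
          _ ≤ ∑ j : Fin (k+1), sigma1 ^ 2 * ((fun l => H j l) ⬝ᵥ fun l => H j l) :=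
              Finset.sum_le_sum fun j _ => spec _
          _ = sigma1 ^ 2 * B := by
              rw [← Finset.mul_sum]
              congr 1
              rw [hBdef, traceSqSum, Finset.sum_comm]
              simp [dotProduct, sq]
      have hGA : ∑ q : Fin m × Fin (k+1), G q.1 q.2 ^ 2 = A := by
        rw [← Finset.univ_product_univ, Finset.sum_product, hAdef, traceSqSum,
          Finset.sum_comm]
      calc (∑ q : Fin m × Fin (k+1), (X * Hᵀ) q.1 q.2 * G q.1 q.2) ^ 2
          ≤ (∑ q : Fin m × Fin (k+1), (X * Hᵀ) q.1 q.2 ^ 2)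
            * (∑ q : Fin m × Fin (k+1), G q.1 q.2 ^ 2) := CS
        _ ≤ (sigma1 ^ 2 * B) * A := by
            rw [hGA]
            exact mul_le_mul_of_nonneg_right hXH hA0
        _ = sigma1 ^ 2 * A * B := by ring
    set a := Real.sqrt A with hadef
    set b := Real.sqrt B with hbdef
    have ha2 : a ^ 2 = A := Real.sq_sqrt hA0
    have hb2 : b ^ 2 = B := Real.sq_sqrt hB0
    have ha0 : 0 ≤ a := Real.sqrt_nonneg _
    have hb0 : 0 ≤ b := Real.sqrt_nonneg _
    have hTle : T ≤ sigma1 * a * b := by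
      have h1 : T ≤ |T| := le_abs_self _
      have h2 : |T| = Real.sqrt (T ^ 2) := (Real.sqrt_sq_eq_abs T).symm
      have h3 : Real.sqrt (T ^ 2) ≤ Real.sqrt (sigma1 ^ 2 * A * B) := Real.sqrt_le_sqrt hT
      have h4 : Real.sqrt (sigma1 ^ 2 * A * B) = sigma1 * a * b := by
        rw [Real.sqrt_mul (by positivity), Real.sqrt_mul (sq_nonneg sigma1),
          Real.sqrt_sq hs.le, hadef, hbdef]
      linarith
    have key : lam * (A + B) ≤ om * A - 2 * (sigma1 * a * b) := by
      have expand : (-lam) * (om * a ^ 2 - 2 * (sigma1 * a * b) - lam * (a ^ 2 + b ^ 2))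
          = (sigma1 * a + lam * b) ^ 2 := by
        linear_combination (a ^ 2) * hlam2
      have hml : 0 < -lam := by linarith
      have h0 : (0:ℝ) ≤ (-lam) * (om * a ^ 2 - 2 * (sigma1 * a * b) - lam * (a ^ 2 + b ^ 2)) := by
        rw [expand]; exact sq_nonneg _
      have hbr : 0 ≤ om * a ^ 2 - 2 * (sigma1 * a * b) - lam * (a ^ 2 + b ^ 2) :=
        (mul_nonneg_iff_of_pos_left hml).mp h0
      rw [ha2, hb2] at hbr
      linarith
    linarith [hQ1, hTle, key]
  -- the minimizing direction
  set z : Fin (k+1) → ℝ := fun j => Z j (Fin.last k) with hzdef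
  have hz2 : ∑ j, z j ^ 2 = 1 := by
    have h := congrFun (congrFun hZ (Fin.last k)) (Fin.last k)
    simp only [Matrix.mul_apply, Matrix.transpose_apply, Matrix.one_apply_eq] at h
    calc ∑ j, z j ^ 2 = ∑ j, Z j (Fin.last k) * Z j (Fin.last k) :=
          Finset.sum_congr rfl fun j _ => by rw [sq]
      _ = 1 := h
  set G0 : Matrix (Fin m) (Fin (k+1)) ℝ := (-lam) • vecMulVec u z with hG0def
  set H0 : Matrix (Fin (k+1)) (Fin n) ℝ := sigma1 • vecMulVec z v with hH0def
  have hG0app : ∀ i j, G0 i j = -lam * (u i * z j) := by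
    intro i j; rw [hG0def]; simp [Matrix.vecMulVec_apply]
  have hH0app : ∀ j t, H0 j t = sigma1 * (z j * v t) := by
    intro j t; rw [hH0def]; simp [Matrix.vecMulVec_apply]
  have hA0val : (G0ᵀ * G0).trace = lam ^ 2 := by
    rw [traceSqSum]
    have : ∀ j : Fin (k+1), ∀ i : Fin m, G0 i j ^ 2 = (lam ^ 2 * u i ^ 2) * z j ^ 2 := by
      intro j i; rw [hG0app]; ring
    calc ∑ j, ∑ i, G0 i j ^ 2 = ∑ j, ∑ i, (lam ^ 2 * u i ^ 2) * z j ^ 2 :=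
          Finset.sum_congr rfl fun j _ => Finset.sum_congr rfl fun i _ => this j i
      _ = (∑ i, lam ^ 2 * u i ^ 2) * (∑ j, z j ^ 2) := sum_prod_eq _ _
      _ = lam ^ 2 := by rw [← Finset.mul_sum, hu, hz2]; ring
  have hB0val : (H0ᵀ * H0).trace = sigma1 ^ 2 := by
    rw [traceSqSum]
    have : ∀ t : Fin n, ∀ j : Fin (k+1), H0 j t ^ 2 = (sigma1 ^ 2 * z j ^ 2) * v t ^ 2 := by
      intro t j; rw [hH0app]; ring
    calc ∑ t, ∑ j, H0 j t ^ 2 = ∑ t, ∑ j, (sigma1 ^ 2 * z j ^ 2) * v t ^ 2 :=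
          Finset.sum_congr rfl fun t _ => Finset.sum_congr rfl fun j _ => this t j
      _ = (∑ j, sigma1 ^ 2 * z j ^ 2) * (∑ t, v t ^ 2) := sum_prod_eq _ _
      _ = sigma1 ^ 2 := by rw [← Finset.mul_sum, hv, hz2]; ring
  -- w = z ᵥ* S and its norm
  have hww : ∑ t, (z ᵥ* S) t ^ 2 = om := by
    have hw1 : ∑ t, (z ᵥ* S) t ^ 2 = (z ᵥ* S) ⬝ᵥ (Sᵀ *ᵥ z) := by
      rw [Matrix.mulVec_transpose]
      simp [dotProduct, sq]
    rw [hw1, Matrix.dotProduct_mulVec, Matrix.vecMul_vecMul, hSS]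
    set e : Fin (k+1) → ℝ := fun l => if l = Fin.last k then 1 else 0 with hedef
    have he : z ᵥ* Z = e := by
      funext l
      have h := congrFun (congrFun hZ l) (Fin.last k)
      simp only [Matrix.mul_apply, Matrix.transpose_apply, Matrix.one_apply] at h
      simp only [Matrix.vecMul, dotProduct, hedef]
      rw [← h]
      exact Finset.sum_congr rfl fun j _ => mul_comm _ _
    have he2 : e ᵥ* Om = om • e := by
      funext t
      simp only [Matrix.vecMul, dotProduct, hedef, Pi.smul_apply, smul_eq_mul]
      rw [Finset.sum_eq_single (Fin.last k)]
      · by_cases ht : t = Fin.last k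
        · subst ht; simp [homdef]
        · rw [if_pos rfl, one_mul, if_neg ht, mul_zero]
          exact hOmDiag (Ne.symm ht)
      · intro l _ hl; simp [hl]
      · intro h; exact absurd (Finset.mem_univ _) h
    have he3 : (om • e) ᵥ* Zᵀ = om • z := by
      funext j
      simp only [Matrix.vecMul, dotProduct, Pi.smul_apply, smul_eq_mul,
        Matrix.transpose_apply, hedef]
      rw [Finset.sum_eq_single (Fin.last k)]
      · simp [hzdef]
      · intro l _ hl; simp [hl]
      · intro h; exact absurd (Finset.mem_univ _) h
    rw [show z ᵥ* (Z * Om * Zᵀ) = ((z ᵥ* Z) ᵥ* Om) ᵥ* Zᵀ by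
      rw [← Matrix.vecMul_vecMul, ← Matrix.vecMul_vecMul]]
    rw [he, he2, he3]
    simp only [dotProduct, Pi.smul_apply, smul_eq_mul]
    have : ∑ t, om * z t * z t = om * ∑ t, z t ^ 2 := by
      rw [Finset.mul_sum]
      exact Finset.sum_congr rfl fun t _ => by ring
    rw [this, hz2, mul_one]
  have hQ0val : ((G0 * S)ᵀ * (G0 * S)).trace = lam ^ 2 * om := by
    rw [traceSqSum]
    have hG0S : ∀ i t, (G0 * S) i t = (-lam * u i) * (z ᵥ* S) t := by
      intro i t
      simp only [Matrix.mul_apply, Matrix.vecMul, dotProduct]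
      rw [Finset.mul_sum]
      exact Finset.sum_congr rfl fun j _ => by rw [hG0app]; ring
    have : ∀ t, ∀ i, (G0 * S) i t ^ 2 = (lam ^ 2 * u i ^ 2) * (z ᵥ* S) t ^ 2 := by
      intro t i; rw [hG0S]; ring
    calc ∑ t, ∑ i, (G0 * S) i t ^ 2
        = ∑ t, ∑ i, (lam ^ 2 * u i ^ 2) * (z ᵥ* S) t ^ 2 :=
          Finset.sum_congr rfl fun t _ => Finset.sum_congr rfl fun i _ => this t i
      _ = (∑ i, lam ^ 2 * u i ^ 2) * (∑ t, (z ᵥ* S) t ^ 2) := sum_prod_eq _ _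
      _ = lam ^ 2 * om := by rw [← Finset.mul_sum, hu, hww]; ring
  have hT0val : (H0ᵀ * G0ᵀ * X).trace = -lam * sigma1 ^ 2 := by
    rw [show (H0ᵀ * G0ᵀ * X).trace = ((X * H0ᵀ) * G0ᵀ).trace by
      rw [trace_mul_comm, Matrix.mul_assoc]]
    rw [trace_mul_transpose_sum]
    have hXH0 : ∀ i j, (X * H0ᵀ) i j = sigma1 ^ 2 * (z j * u i) := by
      intro i j
      have h1 : (X * H0ᵀ) i j = ∑ l, X i l * H0 j l := by
        simp [Matrix.mul_apply]
      have h2 : ∑ l, X i l * H0 j l = (sigma1 * z j) * ∑ l, X i l * v l := by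
        rw [Finset.mul_sum]
        exact Finset.sum_congr rfl fun l _ => by rw [hH0app]; ring
      have h3 : ∑ l, X i l * v l = sigma1 * u i := by
        have := congrFun hXv i
        simpa [Matrix.mulVec, dotProduct] using this
      rw [h1, h2, h3]; ring
    have hterm : ∀ i, ∀ j, (X * H0ᵀ) i j * G0 i j = z j ^ 2 * (-lam * sigma1 ^ 2 * u i ^ 2) := by
      intro i j; rw [hXH0, hG0app]; ring
    calc ∑ i, ∑ j, (X * H0ᵀ) i j * G0 i j
        = ∑ i, ∑ j, z j ^ 2 * (-lam * sigma1 ^ 2 * u i ^ 2) :=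
          Finset.sum_congr rfl fun i _ => Finset.sum_congr rfl fun j _ => hterm i j
      _ = (∑ j, z j ^ 2) * (∑ i, -lam * sigma1 ^ 2 * u i ^ 2) := sum_prod_eq _ _
      _ = -lam * sigma1 ^ 2 := by rw [hz2, ← Finset.mul_sum, hu]; ring
  -- D2J value at (G0, H0)
  have hD2J0 : D2J X 0 G0 S H0 = om * lam ^ 2 + 2 * lam * sigma1 ^ 2 := by
    rw [D2J_zeroW, hQ0val, hT0val]
    ring
  -- G0 ≠ 0
  have hG0ne : ¬(G0 = 0 ∧ H0 = 0) := by
    rintro ⟨hG0z, -⟩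
    obtain ⟨i, hi⟩ : ∃ i, u i ≠ 0 := by
      by_contra hall
      push_neg at hall
      rw [Finset.sum_eq_zero (fun i _ => by rw [hall i]; ring)] at hu
      exact one_ne_zero hu.symm
    obtain ⟨j, hj⟩ : ∃ j, z j ≠ 0 := by
      by_contra hall
      push_neg at hall
      rw [Finset.sum_eq_zero (fun j _ => by rw [hall j]; ring)] at hz2
      exact one_ne_zero hz2.symm
    have := congrFun (congrFun hG0z i) j
    rw [hG0app] at this
    simp only [Matrix.zero_apply] at this
    have hlamne : lam ≠ 0 := ne_of_lt hlamneg
    exact (mul_ne_zero (mul_ne_zero (neg_ne_zero.mpr hlamne) hi) (by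
      exact hj)) (by rw [← mul_assoc] at this; exact this)
  -- membership of lam in the Rayleigh set
  have hden0 : (G0ᵀ * G0).trace + (H0ᵀ * H0).trace = lam ^ 2 + sigma1 ^ 2 := by
    rw [hA0val, hB0val]
  have hdenpos : (0:ℝ) < lam ^ 2 + sigma1 ^ 2 := by positivity
  have hmem : lam ∈ { r : ℝ | ∃ (G : Matrix (Fin m) (Fin (k+1)) ℝ)
      (H : Matrix (Fin (k+1)) (Fin n) ℝ), ¬(G = 0 ∧ H = 0) ∧
      r = D2J X 0 G S H / ((Gᵀ * G).trace + (Hᵀ * H).trace) } := by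
    refine ⟨G0, H0, hG0ne, ?_⟩
    rw [hD2J0, hden0, eq_div_iff hdenpos.ne']
    linear_combination lam * hlam2
  have hlb : ∀ r ∈ { r : ℝ | ∃ (G : Matrix (Fin m) (Fin (k+1)) ℝ)
      (H : Matrix (Fin (k+1)) (Fin n) ℝ), ¬(G = 0 ∧ H = 0) ∧
      r = D2J X 0 G S H / ((Gᵀ * G).trace + (Hᵀ * H).trace) }, lam ≤ r := by
    rintro r ⟨G, H, hne, rfl⟩
    have hA0 : 0 ≤ (Gᵀ * G).trace := trace_nonneg' G
    have hB0 : 0 ≤ (Hᵀ * H).trace := trace_nonneg' H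
    have hpos : 0 < (Gᵀ * G).trace + (Hᵀ * H).trace := by
      rcases lt_or_eq_of_le (add_nonneg hA0 hB0) with h | h
      · exact h
      · exfalso
        have hA : (Gᵀ * G).trace = 0 := by linarith
        have hB : (Hᵀ * H).trace = 0 := by linarith
        exact hne ⟨matrix_eq_zero_of_trace G hA, matrix_eq_zero_of_trace H hB⟩
    rw [le_div_iff₀ hpos]
    have := hlower G H
    linarith [this]
  have hInf : lamMin X W S = lam := by
    show sInf _ = lam
    apply le_antisymm
    · exact csInf_le ⟨lam, hlb⟩ hmem
    · exact le_csInf ⟨lam, hmem⟩ hlb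
  exact ⟨crit1, crit2, hInf, by rw [hInf]; exact hlamneg⟩
end

section
/- Let (W,S) = (0, C₀ᵀV₀ᵀ) with XV₀ = 0 and C₀ᵀC₀ = ZΩZᵀ. For each nonzero singular value σᵢ of X with left/right singular vectors uᵢ, vᵢ, and each column zⱼ of Z with eigenvalue ωⱼ, there exist real δ, δ' with δδ' = −1 such that (uᵢzⱼᵀ, δ zⱼvᵢᵀ) and (uᵢzⱼᵀ, δ' zⱼvᵢᵀ) are orthogonal eigenvectors of ∇²J(W,S) with eigenvalues ωⱼ/2 − √(σᵢ² + (ωⱼ/2)²) < 0 and ωⱼ/2 + √(σᵢ² + (ωⱼ/2)²) > 0. -/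
open Matrix
set_option maxHeartbeats 1000000

/-- First component of the Hessian map ∇²J(W,S)[(G,H)]. -/
noncomputable def hess1 {m n k : ℕ} (X : Matrix (Fin m) (Fin n) ℝ)
    (W G : Matrix (Fin m) (Fin k) ℝ) (S H : Matrix (Fin k) (Fin n) ℝ) :
    Matrix (Fin m) (Fin k) ℝ :=
  G * (S * Sᵀ) + W * H * Sᵀ + (W * S - X) * Hᵀ

/-- Second component of the Hessian map ∇²J(W,S)[(G,H)]. -/
noncomputable def hess2 {m n k : ℕ} (X : Matrix (Fin m) (Fin n) ℝ)
    (W G : Matrix (Fin m) (Fin k) ℝ) (S H : Matrix (Fin k) (Fin n) ℝ) :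
    Matrix (Fin k) (Fin n) ℝ :=
  Wᵀ * W * H + Wᵀ * G * S + Gᵀ * (W * S - X)


private lemma outer_mul {a b c : ℕ} (u : Fin a → ℝ) (z : Fin b → ℝ)
    (A : Matrix (Fin b) (Fin c) ℝ) :
    vecMulVec u z * A = vecMulVec u (Aᵀ *ᵥ z) := by
  ext i j
  simp [mul_apply, vecMulVec_apply, mulVec, dotProduct, Finset.mul_sum, mul_comm, mul_left_comm]

private lemma mul_outer {a b c : ℕ} (A : Matrix (Fin a) (Fin b) ℝ) (z : Fin b → ℝ)
    (v : Fin c → ℝ) :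
    A * vecMulVec z v = vecMulVec (A *ᵥ z) v := by
  ext i j
  simp only [mul_apply, vecMulVec_apply, mulVec, dotProduct, Finset.sum_mul]
  exact Finset.sum_congr rfl fun x _ => by ring

private lemma outer_smul_left {a b : ℕ} (c : ℝ) (u : Fin a → ℝ) (z : Fin b → ℝ) :
    vecMulVec (c • u) z = c • vecMulVec u z := by
  ext i j; simp [vecMulVec_apply]; ring

private lemma outer_smul_right {a b : ℕ} (u : Fin a → ℝ) (c : ℝ) (z : Fin b → ℝ) :
    vecMulVec u (c • z) = c • vecMulVec u z := by
  ext i j; simp [vecMulVec_apply]; ring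

private lemma outer_transpose {a b : ℕ} (z : Fin a → ℝ) (v : Fin b → ℝ) :
    (vecMulVec z v)ᵀ = vecMulVec v z := by
  ext i j; simp [vecMulVec_apply]; ring

private lemma outer_mul_outer {a b c : ℕ} (x : Fin a → ℝ) (y : Fin b → ℝ)
    (w : Fin b → ℝ) (t : Fin c → ℝ) :
    vecMulVec x y * vecMulVec w t = (∑ i, y i * w i) • vecMulVec x t := by
  ext i j
  simp only [mul_apply, vecMulVec_apply, Matrix.smul_apply, smul_eq_mul, Finset.sum_mul]
  exact Finset.sum_congr rfl fun x _ => by ring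

private lemma trace_outer {a : ℕ} (x y : Fin a → ℝ) :
    (vecMulVec x y).trace = ∑ i, x i * y i := by
  simp [trace, diag, vecMulVec_apply]

/-- at (W,S) = (0, C₀ᵀV₀ᵀ), for each singular pair (σ,u,v) of X
with σ > 0 and each unit eigenvector z of C₀ᵀC₀ with eigenvalue ω, there exist
δ, δ' with δδ' = −1 such that (uzᵀ, δ zvᵀ) and (uzᵀ, δ' zvᵀ) are orthogonal
eigenvectors of ∇²J(W,S) with eigenvalues ω/2 ∓ √(σ² + (ω/2)²). -/
theorem zero_point_eigenvectors {m n k p : ℕ}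
    (X : Matrix (Fin m) (Fin n) ℝ)
    (V0 : Matrix (Fin n) (Fin p) ℝ) (C0 : Matrix (Fin p) (Fin k) ℝ)
    (hXV0 : X * V0 = 0) (hV0 : V0ᵀ * V0 = 1)
    (sigma : ℝ) (hs : 0 < sigma)
    (u : Fin m → ℝ) (v : Fin n → ℝ) (z : Fin k → ℝ)
    (hu : ∑ i, u i ^ 2 = 1) (hv : ∑ i, v i ^ 2 = 1) (hz : ∑ i, z i ^ 2 = 1)
    (hXv : X *ᵥ v = sigma • u) (hXtu : Xᵀ *ᵥ u = sigma • v)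
    (om : ℝ) (hom : 0 ≤ om) (hCz : (C0ᵀ * C0) *ᵥ z = om • z) :
    letI W : Matrix (Fin m) (Fin k) ℝ := 0
    letI S : Matrix (Fin k) (Fin n) ℝ := C0ᵀ * V0ᵀ
    letI G : Matrix (Fin m) (Fin k) ℝ := vecMulVec u z
    letI Hm : Matrix (Fin k) (Fin n) ℝ := vecMulVec z v
    letI rho : ℝ := om / 2 - Real.sqrt (sigma ^ 2 + (om / 2) ^ 2)
    letI rho' : ℝ := om / 2 + Real.sqrt (sigma ^ 2 + (om / 2) ^ 2)
    ∃ δ δ' : ℝ, δ * δ' = -1 ∧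
      hess1 X W G S (δ • Hm) = rho • G ∧
      hess2 X W G S (δ • Hm) = rho • (δ • Hm) ∧
      hess1 X W G S (δ' • Hm) = rho' • G ∧
      hess2 X W G S (δ' • Hm) = rho' • (δ' • Hm) ∧
      (Gᵀ * G).trace + ((δ • Hm)ᵀ * (δ' • Hm)).trace = 0 ∧
      rho < 0 ∧ 0 < rho' := by
  set s : ℝ := Real.sqrt (sigma ^ 2 + (om / 2) ^ 2) with hsdef
  have hs0 : 0 ≤ s := Real.sqrt_nonneg _
  have hs2 : s ^ 2 = sigma ^ 2 + (om / 2) ^ 2 := by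
    rw [hsdef, Real.sq_sqrt]; positivity
  have hsigma : sigma ≠ 0 := ne_of_gt hs
  have hSS : (C0ᵀ * V0ᵀ) * (C0ᵀ * V0ᵀ)ᵀ = C0ᵀ * C0 := by
    rw [Matrix.transpose_mul, Matrix.transpose_transpose, Matrix.transpose_transpose,
      Matrix.mul_assoc, ← Matrix.mul_assoc V0ᵀ, hV0, Matrix.one_mul]
  have hCzt : (C0ᵀ * C0)ᵀ *ᵥ z = om • z := by
    rwa [Matrix.transpose_mul, Matrix.transpose_transpose]
  have key1 : ∀ d r : ℝ, om - d * sigma = r →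
      hess1 X (0 : Matrix (Fin m) (Fin k) ℝ) (vecMulVec u z) (C0ᵀ * V0ᵀ)
        (d • vecMulVec z v) = r • vecMulVec u z := by
    intro d r hdr
    simp only [hess1, Matrix.zero_mul, Matrix.mul_zero, zero_sub, zero_add, add_zero,
      Matrix.transpose_smul, outer_transpose, Matrix.mul_smul, Matrix.neg_mul,
      Matrix.mul_neg, Matrix.smul_mul, smul_zero, smul_neg, smul_smul]
    rw [hSS, outer_mul, hCzt, mul_outer, hXv, outer_smul_right, outer_smul_left,
      ← sub_eq_add_neg, smul_smul, ← sub_smul, hdr]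
  have key2 : ∀ d r : ℝ, r * d = -sigma →
      hess2 X (0 : Matrix (Fin m) (Fin k) ℝ) (vecMulVec u z) (C0ᵀ * V0ᵀ)
        (d • vecMulVec z v) = r • d • vecMulVec z v := by
    intro d r hdr
    simp only [hess2, Matrix.transpose_zero, Matrix.zero_mul, Matrix.mul_zero,
      zero_add, zero_sub, Matrix.mul_neg, outer_transpose]
    rw [outer_mul, hXtu, outer_smul_right, smul_smul, hdr, neg_smul]
  refine ⟨(om / 2 + s) / sigma, (om / 2 - s) / sigma, ?_,
    key1 _ _ (by field_simp; ring),
    key2 _ _ (by field_simp; nlinarith [hs2]),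
    key1 _ _ (by field_simp; ring),
    key2 _ _ (by field_simp; nlinarith [hs2]), ?_, ?_, ?_⟩
  · field_simp; nlinarith [hs2]
  · rw [Matrix.transpose_smul, outer_transpose, outer_transpose,
      Matrix.smul_mul, Matrix.mul_smul, outer_mul_outer, outer_mul_outer,
      smul_smul, smul_smul, trace_smul, trace_smul, trace_outer, trace_outer,
      smul_eq_mul, smul_eq_mul]
    have h1 : ∑ i, u i * u i = 1 := by
      rw [← hu]; exact Finset.sum_congr rfl fun i _ => (sq (u i)).symm
    have h2 : ∑ i, z i * z i = 1 := by
      rw [← hz]; exact Finset.sum_congr rfl fun i _ => (sq (z i)).symm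
    have h3 : ∑ i, v i * v i = 1 := by
      rw [← hv]; exact Finset.sum_congr rfl fun i _ => (sq (v i)).symm
    rw [h1, h2, h3]
    field_simp
    nlinarith [hs2]
  · nlinarith [hs2, hs0, hs, hom]
  · nlinarith [hs2, hs0, hs, hom]
end

section
/- Let (W,S) be a critical point of J with W = Ūa and S = a⁻¹ΛV̄ᵀ, where Ū has orthonormal columns that are left singular vectors of X with singular values Λ = diag(λ₁,…,λ_k), V̄ the matching right singular vectors, and a ≠ 0. For any singular pair (σᵢ, uᵢ, vᵢ) of X with σᵢ > 0 and uᵢᵀŪ = 0, and any j ∈ {1,…,k}, the number ρ = (1/2)((λⱼ² + a⁴)/a² − √(((λⱼ² − a⁴)/a²)² + 4σᵢ²)) is an eigenvalue of ∇²J(W,S), and ρ < 0 iff λⱼ < σᵢ, ρ = 0 iff λⱼ = σᵢ, ρ > 0 iff λⱼ > σᵢ. -/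
open Matrix

section Aux

lemma vecMulVec_mul_eq {p q r : ℕ} (x : Fin p → ℝ) (y : Fin q → ℝ)
    (M : Matrix (Fin q) (Fin r) ℝ) :
    vecMulVec x y * M = vecMulVec x (y ᵥ* M) := by
  ext i l
  simp [vecMulVec_apply, Matrix.mul_apply, vecMul, dotProduct, Finset.mul_sum, mul_assoc]

lemma mul_vecMulVec_eq {p q r : ℕ} (M : Matrix (Fin p) (Fin q) ℝ)
    (x : Fin q → ℝ) (y : Fin r → ℝ) :
    M * vecMulVec x y = vecMulVec (M *ᵥ x) y := by
  ext i l
  simp only [vecMulVec_apply, Matrix.mul_apply, mulVec, dotProduct, Finset.sum_mul, mul_assoc]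

lemma vecMulVec_transpose' {p q : ℕ} (x : Fin p → ℝ) (y : Fin q → ℝ) :
    (vecMulVec x y)ᵀ = vecMulVec y x := by
  ext i l; simp [vecMulVec_apply, mul_comm]

lemma smul_vecMulVec_left {p q : ℕ} (c : ℝ) (x : Fin p → ℝ) (y : Fin q → ℝ) :
    vecMulVec (c • x) y = c • vecMulVec x y := by
  ext i l; simp [vecMulVec_apply, mul_assoc]

lemma smul_vecMulVec_right {p q : ℕ} (c : ℝ) (x : Fin p → ℝ) (y : Fin q → ℝ) :
    vecMulVec x (c • y) = c • vecMulVec x y := by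
  ext i l; simp [vecMulVec_apply]; ring

lemma vecMulVec_zero_right {p q : ℕ} (x : Fin p → ℝ) :
    vecMulVec x (0 : Fin q → ℝ) = 0 := by
  ext i l; simp [vecMulVec_apply]

lemma vecMulVec_zero_left {p q : ℕ} (y : Fin q → ℝ) :
    vecMulVec (0 : Fin p → ℝ) y = 0 := by
  ext i l; simp [vecMulVec_apply]

lemma aux_sq_lt {x y : ℝ} (hx : 0 ≤ x) (hy : 0 ≤ y) : x ^ 2 < y ^ 2 ↔ x < y := by
  constructor
  · intro h; by_contra h2; push_neg at h2; nlinarith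
  · intro h; nlinarith

lemma aux_sq_eq {x y : ℝ} (hx : 0 ≤ x) (hy : 0 ≤ y) : x ^ 2 = y ^ 2 ↔ x = y := by
  constructor
  · intro h
    rcases lt_trichotomy x y with hl | he | hg
    · exfalso; have := (aux_sq_lt hx hy).mpr hl; linarith
    · exact he
    · exfalso; have := (aux_sq_lt hy hx).mpr hg; linarith
  · rintro rfl; rfl

end Aux

set_option maxHeartbeats 1000000 in
/-- at the critical point (Ūa, a⁻¹ΛV̄ᵀ), for a singular pair
(σ,u,v) of X with σ > 0 and uᵀŪ = 0, vᵀV̄ = 0, and any j, the number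
ρ = (1/2)((λⱼ²+a⁴)/a² − √(((λⱼ²−a⁴)/a²)² + 4σ²)) is an eigenvalue of ∇²J,
whose sign is determined by the comparison of λⱼ with σ. -/
theorem curve_eigenvalue {m n k : ℕ}
    (X : Matrix (Fin m) (Fin n) ℝ)
    (Ubar : Matrix (Fin m) (Fin k) ℝ) (Vbar : Matrix (Fin n) (Fin k) ℝ)
    (Lam : Matrix (Fin k) (Fin k) ℝ)
    (hU : Ubarᵀ * Ubar = 1) (hV : Vbarᵀ * Vbar = 1)
    (hLamDiag : Lam.IsDiag) (hLamNonneg : ∀ i, 0 ≤ Lam i i)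
    (hXV : X * Vbar = Ubar * Lam) (hXtU : Xᵀ * Ubar = Vbar * Lam)
    (sigma : ℝ) (hs : 0 < sigma)
    (u : Fin m → ℝ) (v : Fin n → ℝ)
    (hu : ∑ i, u i ^ 2 = 1) (hv : ∑ i, v i ^ 2 = 1)
    (hXv : X *ᵥ v = sigma • u) (hXtu : Xᵀ *ᵥ u = sigma • v)
    (hUu : Ubarᵀ *ᵥ u = 0) (hVv : Vbarᵀ *ᵥ v = 0)
    (a : ℝ) (ha : a ≠ 0) (j : Fin k) :
    letI W : Matrix (Fin m) (Fin k) ℝ := a • Ubar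
    letI S : Matrix (Fin k) (Fin n) ℝ := a⁻¹ • (Lam * Vbarᵀ)
    letI lj : ℝ := Lam j j
    letI rho : ℝ := (1 / 2) * ((lj ^ 2 + a ^ 4) / a ^ 2
      - Real.sqrt (((lj ^ 2 - a ^ 4) / a ^ 2) ^ 2 + 4 * sigma ^ 2))
    (∃ (G : Matrix (Fin m) (Fin k) ℝ) (H : Matrix (Fin k) (Fin n) ℝ),
        ¬(G = 0 ∧ H = 0) ∧
        hess1 X W G S H = rho • G ∧ hess2 X W G S H = rho • H) ∧
      (rho < 0 ↔ lj < sigma) ∧ (rho = 0 ↔ lj = sigma) ∧ (0 < rho ↔ sigma < lj) := by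
  set W : Matrix (Fin m) (Fin k) ℝ := a • Ubar with hW
  set S : Matrix (Fin k) (Fin n) ℝ := a⁻¹ • (Lam * Vbarᵀ) with hS
  set lj : ℝ := Lam j j with hlj
  have ha2 : (a : ℝ) ^ 2 ≠ 0 := pow_ne_zero _ ha
  have ha2pos : 0 < a ^ 2 := by positivity
  set D : ℝ := (lj ^ 2 - a ^ 4) / a ^ 2 with hD
  set T : ℝ := (lj ^ 2 + a ^ 4) / a ^ 2 with hT
  have hljnn : 0 ≤ lj := hLamNonneg j
  have hsnn : 0 ≤ D ^ 2 + 4 * sigma ^ 2 := by positivity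
  set s : ℝ := Real.sqrt (D ^ 2 + 4 * sigma ^ 2) with hsdef
  set rho : ℝ := (1 / 2) * ((lj ^ 2 + a ^ 4) / a ^ 2 - s) with hrhodef
  have hs2 : s ^ 2 = D ^ 2 + 4 * sigma ^ 2 := Real.sq_sqrt hsnn
  have hsnonneg : 0 ≤ s := Real.sqrt_nonneg _
  have hrho : rho = (1/2) * (T - s) := by rw [hrhodef, hT]
  have hTpos : 0 < T := by rw [hT]; positivity
  have hTD : T ^ 2 - D ^ 2 = 4 * lj ^ 2 := by
    rw [hT, hD]; field_simp; ring
  have key : rho * (2 * (T + s)) = 4 * (lj ^ 2 - sigma ^ 2) := by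
    rw [hrho]
    have h1 : (1/2) * (T - s) * (2 * (T + s)) = T ^ 2 - s ^ 2 := by ring
    rw [h1, hs2]; linarith [hTD]
  have hTs : 0 < 2 * (T + s) := by linarith
  -- characteristic equation for rho
  have hchar : rho ^ 2 - (lj ^ 2 / a ^ 2 + a ^ 2) * rho + (lj ^ 2 - sigma ^ 2) = 0 := by
    have hTeq : T = lj ^ 2 / a ^ 2 + a ^ 2 := by rw [hT]; field_simp
    have h4 : 4 * (rho ^ 2 - (lj ^ 2 / a ^ 2 + a ^ 2) * rho + (lj ^ 2 - sigma ^ 2))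
        = s ^ 2 - T ^ 2 + 4 * lj ^ 2 - 4 * sigma ^ 2 := by
      rw [hrho, ← hTeq]; ring
    have h5 : s ^ 2 - T ^ 2 + 4 * lj ^ 2 - 4 * sigma ^ 2 = 0 := by
      rw [hs2]; linarith [hTD]
    linarith [h4, h5]
  clear_value D T s rho
  refine ⟨?_, ?_, ?_, ?_⟩
  · -- eigenvector
    set e : Fin k → ℝ := Pi.single j 1 with he
    set d : ℝ := lj ^ 2 / a ^ 2 - rho with hd
    set G0 : Matrix (Fin m) (Fin k) ℝ := vecMulVec u e with hG0
    set H0 : Matrix (Fin k) (Fin n) ℝ := vecMulVec e v with hH0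
    -- entries of Lam * Lamᵀ in column/row j
    have hLLcol : ∀ l, (Lam * Lamᵀ) l j = if l = j then lj ^ 2 else 0 := by
      intro l
      rw [Matrix.mul_apply]
      by_cases hl : l = j
      · subst hl
        rw [if_pos rfl, Finset.sum_eq_single l]
        · rw [transpose_apply, ← hlj, sq]
        · intro b _ hb
          rw [transpose_apply, hLamDiag (Ne.symm hb)]
          ring
        · intro hmem; exact absurd (Finset.mem_univ l) hmem
      · rw [if_neg hl]
        apply Finset.sum_eq_zero
        intro x _
        rw [transpose_apply]
        by_cases hx : x = j
        · subst hx; rw [hLamDiag hl]; ring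
        · rw [hLamDiag (Ne.symm hx)]; ring
    have hLLrow : ∀ l, (Lam * Lamᵀ) j l = if l = j then lj ^ 2 else 0 := by
      intro l
      rw [show (Lam * Lamᵀ) j l = (Lam * Lamᵀ) l j from by
        simp only [Matrix.mul_apply, transpose_apply]
        exact Finset.sum_congr rfl (fun x _ => mul_comm _ _)]
      exact hLLcol l
    have hSS : S * Sᵀ = (a ^ 2)⁻¹ • (Lam * Lamᵀ) := by
      rw [hS, Matrix.transpose_smul, Matrix.smul_mul, Matrix.mul_smul, smul_smul,
        Matrix.transpose_mul, Matrix.transpose_transpose]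
      have h1 : Lam * Vbarᵀ * (Vbar * Lamᵀ) = Lam * Lamᵀ := by
        rw [← Matrix.mul_assoc, Matrix.mul_assoc Lam, hV, Matrix.mul_one]
      rw [h1, ← sq, ← inv_pow]
    have heSS : e ᵥ* (S * Sᵀ) = (lj ^ 2 / a ^ 2) • e := by
      rw [hSS, he, single_vecMul]
      funext l
      simp only [Matrix.row_apply, Matrix.smul_apply, smul_eq_mul, one_mul, Pi.smul_apply, Pi.single_apply]
      rw [hLLrow l]
      by_cases hl : l = j
      · rw [if_pos hl, if_pos hl]; field_simp
      · rw [if_neg hl, if_neg hl]; ring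
    have hSv : S *ᵥ v = 0 := by
      rw [hS, smul_mulVec, ← Matrix.mulVec_mulVec, hVv, Matrix.mulVec_zero, smul_zero]
    have hWS : W * S = Ubar * (Lam * Vbarᵀ) := by
      rw [hW, hS, Matrix.smul_mul, Matrix.mul_smul, smul_smul, mul_inv_cancel₀ ha, one_smul]
    have hWSv : (W * S) *ᵥ v = 0 := by
      rw [hWS, ← Matrix.mulVec_mulVec, ← Matrix.mulVec_mulVec, hVv,
        Matrix.mulVec_zero, Matrix.mulVec_zero]
    have hWStu : (W * S)ᵀ *ᵥ u = 0 := by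
      rw [hWS, Matrix.transpose_mul, Matrix.transpose_mul, Matrix.transpose_transpose,
        Matrix.mul_assoc, ← Matrix.mulVec_mulVec, ← Matrix.mulVec_mulVec, hUu,
        Matrix.mulVec_zero, Matrix.mulVec_zero]
    have hWtW : Wᵀ * W = (a ^ 2) • (1 : Matrix (Fin k) (Fin k) ℝ) := by
      rw [hW, Matrix.transpose_smul, Matrix.smul_mul, Matrix.mul_smul, smul_smul, hU, sq]
    have hWtG : Wᵀ * G0 = 0 := by
      rw [hW, Matrix.transpose_smul, Matrix.smul_mul, hG0, mul_vecMulVec_eq, hUu,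
        vecMulVec_zero_left, smul_zero]
    clear_value W S
    refine ⟨sigma • G0, d • H0, ?_, ?_, ?_⟩
    · rintro ⟨hG, -⟩
      have hune : u ≠ 0 := by
        intro h0; rw [h0] at hu; simp at hu
      obtain ⟨i, hi⟩ : ∃ i, u i ≠ 0 := Function.ne_iff.mp hune
      have h2 := congrFun (congrFun hG i) j
      simp only [hG0, Matrix.smul_apply, vecMulVec_apply, he, Pi.single_eq_same, mul_one,
        Matrix.zero_apply, smul_eq_mul] at h2
      exact absurd h2 (mul_ne_zero (ne_of_gt hs) hi)
    · -- hess1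
      show (sigma • G0) * (S * Sᵀ) + W * (d • H0) * Sᵀ + (W * S - X) * (d • H0)ᵀ
          = rho • (sigma • G0)
      have t1 : (sigma • G0) * (S * Sᵀ) = (sigma * (lj ^ 2 / a ^ 2)) • G0 := by
        rw [Matrix.smul_mul, hG0, vecMulVec_mul_eq, heSS, smul_vecMulVec_right, smul_smul]
      have hHSt : H0 * Sᵀ = 0 := by
        rw [hH0, vecMulVec_mul_eq, Matrix.vecMul_transpose, hSv, vecMulVec_zero_right]
      have t2 : W * (d • H0) * Sᵀ = 0 := by
        rw [Matrix.mul_assoc, Matrix.smul_mul, hHSt, smul_zero, Matrix.mul_zero]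
      have t3 : (W * S - X) * (d • H0)ᵀ = (- (d * sigma)) • G0 := by
        rw [Matrix.transpose_smul, hH0, vecMulVec_transpose', Matrix.mul_smul,
          mul_vecMulVec_eq, Matrix.sub_mulVec, hWSv, hXv, zero_sub, hG0]
        rw [show -(sigma • u) = (-sigma) • u from by simp, smul_vecMulVec_left, smul_smul]
        congr 1
        ring
      rw [t1, t2, t3, add_zero, smul_smul, ← add_smul]
      congr 1
      rw [hd]; ring
    · -- hess2
      show Wᵀ * W * (d • H0) + Wᵀ * (sigma • G0) * S + (sigma • G0)ᵀ * (W * S - X)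
          = rho • (d • H0)
      have t1 : Wᵀ * W * (d • H0) = (a ^ 2 * d) • H0 := by
        rw [hWtW, Matrix.smul_mul, Matrix.one_mul, smul_smul]
      have t2 : Wᵀ * (sigma • G0) * S = 0 := by
        rw [Matrix.mul_smul, hWtG, smul_zero, Matrix.zero_mul]
      have t3 : (sigma • G0)ᵀ * (W * S - X) = (-(sigma * sigma)) • H0 := by
        rw [Matrix.transpose_smul, hG0, vecMulVec_transpose', Matrix.smul_mul,
          vecMulVec_mul_eq]
        have h6 : u ᵥ* (W * S - X) = (-sigma) • v := by
          rw [← Matrix.mulVec_transpose, Matrix.transpose_sub, Matrix.sub_mulVec,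
            hWStu, hXtu, zero_sub]
          simp
        rw [h6, smul_vecMulVec_right, hH0, smul_smul]
        congr 1
        ring
      rw [t1, t2, t3, add_zero, smul_smul, ← add_smul]
      congr 1
      have hc : a ^ 2 * (lj ^ 2 / a ^ 2) = lj ^ 2 := by field_simp
      rw [hd]
      linear_combination hchar + hc
  · -- rho < 0 ↔ lj < sigma
    refine Iff.trans ?_ (aux_sq_lt hljnn hs.le)
    constructor
    · intro h
      have h2 := mul_neg_of_neg_of_pos h hTs
      rw [key] at h2; linarith
    · intro h
      have h2 : rho * (2 * (T + s)) < 0 := by rw [key]; linarith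
      by_contra h3
      push_neg at h3
      have := mul_nonneg h3 hTs.le
      linarith
  · -- rho = 0 ↔ lj = sigma
    refine Iff.trans ?_ (aux_sq_eq hljnn hs.le)
    constructor
    · intro h
      have h2 : rho * (2 * (T + s)) = 0 := by rw [h]; ring
      rw [key] at h2; linarith
    · intro h
      have h2 : rho * (2 * (T + s)) = 0 := by rw [key]; linarith
      rcases mul_eq_zero.mp h2 with h3 | h3
      · exact h3
      · linarith
  · -- 0 < rho ↔ sigma < lj
    refine Iff.trans ?_ (aux_sq_lt hs.le hljnn)
    constructor
    · intro h
      have h2 := mul_pos h hTs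
      rw [key] at h2; linarith
    · intro h
      have h2 : 0 < rho * (2 * (T + s)) := by rw [key]; linarith
      by_contra h3
      push_neg at h3
      have := mul_nonpos_of_nonpos_of_nonneg h3 hTs.le
      linarith
end

section
/- Let C = AAᵀ for invertible A ∈ GL(k) be partitioned with blocks R₁ ∈ ℝ^{q×q}, R₂, R₃. If C diag(I_q, 0) C = diag(Λ², C₀ᵀC₀) where Λ² ∈ ℝ^{q×q} is diagonal nonnegative, then Λ is invertible, R₁ = Λ, R₃ = 0, and C₀ = 0. Consequently, the orbit of the canonical point ([Ū 0], [ΛV̄ᵀ; C₀ᵀV₀ᵀ]) under GL(k) intersects the balanced manifold M₀ = {(W,S) : WᵀW = SSᵀ} if and only if Λ is invertible and C₀ = 0. -/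
open Matrix

section Aux

variable {ι κ : Type*} [Fintype ι] [Fintype κ] [DecidableEq ι] [DecidableEq κ]

lemma aux_posDef_mul_transpose (A : Matrix ι ι ℝ) (hA : IsUnit A) :
    (A * Aᵀ).PosDef := by
  rw [posDef_iff_dotProduct_mulVec]
  constructor
  · have h := isHermitian_mul_conjTranspose_self A
    rwa [conjTranspose_eq_transpose_of_trivial] at h
  · intro x hx
    have hAT : IsUnit Aᵀ := by
      rw [Matrix.isUnit_iff_isUnit_det, det_transpose, ← Matrix.isUnit_iff_isUnit_det]
      exact hA
    have hy : Aᵀ *ᵥ x ≠ 0 := by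
      intro h
      apply hx
      have hinj := mulVec_injective_iff_isUnit.2 hAT
      have : Aᵀ *ᵥ x = Aᵀ *ᵥ 0 := by rw [h, mulVec_zero]
      exact hinj this
    have hcalc : star x ⬝ᵥ (A * Aᵀ) *ᵥ x = (Aᵀ *ᵥ x) ⬝ᵥ (Aᵀ *ᵥ x) := by
      rw [star_trivial, ← mulVec_mulVec, dotProduct_mulVec, ← mulVec_transpose]
    rw [hcalc]
    have h1 : 0 ≤ (Aᵀ *ᵥ x) ⬝ᵥ (Aᵀ *ᵥ x) :=
      Finset.sum_nonneg fun i _ => mul_self_nonneg _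
    exact lt_of_le_of_ne h1 fun h => hy (dotProduct_self_eq_zero.mp h.symm)

lemma aux_posDef_toBlocks₁₁ {C : Matrix (ι ⊕ κ) (ι ⊕ κ) ℝ} (hC : C.PosDef) :
    C.toBlocks₁₁.PosDef := by
  rw [posDef_iff_dotProduct_mulVec]
  constructor
  · exact hC.1.submatrix Sum.inl
  · intro x hx
    have hz : Sum.elim x (0 : κ → ℝ) ≠ 0 := fun h => hx (by ext i; exact congrFun h (Sum.inl i))
    have key : star (Sum.elim x (0 : κ → ℝ)) ⬝ᵥ C *ᵥ Sum.elim x (0 : κ → ℝ)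
        = star x ⬝ᵥ C.toBlocks₁₁ *ᵥ x := by
      conv_lhs => rw [← fromBlocks_toBlocks C]
      rw [fromBlocks_mulVec]
      simp [sumElim_dotProduct_sumElim]
    rw [← key]
    exact hC.dotProduct_mulVec_pos hz

lemma aux_key {q s p : ℕ} (Lam : Matrix (Fin q) (Fin q) ℝ) (C0 : Matrix (Fin p) (Fin s) ℝ)
    (hLamDiag : Lam.IsDiag) (hLamNonneg : ∀ i, 0 ≤ Lam i i)
    (A : Matrix (Fin q ⊕ Fin s) (Fin q ⊕ Fin s) ℝ) (hA : IsUnit A)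
    (heq : (A * Aᵀ) * fromBlocks 1 0 0 0 * (A * Aᵀ)
      = fromBlocks (Lam * Lam) 0 0 (C0ᵀ * C0)) :
    IsUnit Lam ∧ (A * Aᵀ).toBlocks₁₁ = Lam ∧ (A * Aᵀ).toBlocks₁₂ = 0 ∧ C0 = 0 := by
  set C := A * Aᵀ with hCdef
  have hC : C.PosDef := aux_posDef_mul_transpose A hA
  have hCsym : Cᵀ = C := by
    have h := hC.1
    rwa [IsHermitian, conjTranspose_eq_transpose_of_trivial] at h
  have hCblocks : C = fromBlocks C.toBlocks₁₁ C.toBlocks₁₂ C.toBlocks₂₁ C.toBlocks₂₂ :=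
    (fromBlocks_toBlocks C).symm
  have hR21 : C.toBlocks₂₁ = C.toBlocks₁₂ᵀ := by
    ext i j
    conv_lhs => rw [show C.toBlocks₂₁ i j = C (Sum.inr i) (Sum.inl j) from rfl, ← hCsym]
    rfl
  have expand : C * fromBlocks 1 0 0 0 * C
      = fromBlocks (C.toBlocks₁₁ * C.toBlocks₁₁) (C.toBlocks₁₁ * C.toBlocks₁₂)
          (C.toBlocks₂₁ * C.toBlocks₁₁) (C.toBlocks₂₁ * C.toBlocks₁₂) := by
    conv_lhs => rw [hCblocks]
    rw [fromBlocks_multiply, fromBlocks_multiply]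
    simp [Matrix.mul_zero, Matrix.zero_mul, Matrix.mul_one]
  rw [expand] at heq
  have e11 := congrArg Matrix.toBlocks₁₁ heq
  have e12 := congrArg Matrix.toBlocks₁₂ heq
  have e22 := congrArg Matrix.toBlocks₂₂ heq
  simp only [toBlocks_fromBlocks₁₁, toBlocks_fromBlocks₁₂, toBlocks_fromBlocks₂₂] at e11 e12 e22
  have hR1 : C.toBlocks₁₁.PosDef := aux_posDef_toBlocks₁₁ hC
  have hLamPSD : Lam.PosSemidef := by
    rw [← hLamDiag.diagonal_diag]
    exact PosSemidef.diagonal fun i => hLamNonneg i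
  have hR1Lam : C.toBlocks₁₁ = Lam := by
    open scoped MatrixOrder in
    exact (CFC.sq_eq_sq_iff _ _ hR1.posSemidef.nonneg hLamPSD.nonneg).1
      (by rw [pow_two, pow_two]; exact e11)
  have hLamUnit : IsUnit Lam := hR1Lam ▸ hR1.isUnit
  have hR2 : C.toBlocks₁₂ = 0 := by
    have hdet : IsUnit C.toBlocks₁₁.det := (isUnit_iff_isUnit_det _).1 hR1.isUnit
    calc C.toBlocks₁₂ = (C.toBlocks₁₁⁻¹ * C.toBlocks₁₁) * C.toBlocks₁₂ := by
          rw [nonsing_inv_mul _ hdet, Matrix.one_mul]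
      _ = C.toBlocks₁₁⁻¹ * (C.toBlocks₁₁ * C.toBlocks₁₂) := by rw [Matrix.mul_assoc]
      _ = 0 := by rw [e12, Matrix.mul_zero]
  have hC0 : C0 = 0 := by
    rw [hR21, hR2] at e22
    have h0 : C0ᴴ * C0 = 0 := by
      rw [conjTranspose_eq_transpose_of_trivial, ← e22]
      simp
    exact conjTranspose_mul_self_eq_zero.mp h0
  exact ⟨hLamUnit, hR1Lam, hR2, hC0⟩

end Aux

/-- block analysis of the balance equation. If C = AAᵀ (A invertible)
satisfies C·diag(I_q,0)·C = diag(Λ², C₀ᵀC₀) with Λ diagonal nonnegative, then Λ is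
invertible, the (1,1) block of C is Λ, the (1,2) block is 0, and C₀ = 0.
Consequently, the GL(k)-orbit of the canonical point ([Ū 0], [ΛV̄ᵀ; C₀ᵀV₀ᵀ])
meets the balanced manifold M₀ = {WᵀW = SSᵀ} iff Λ is invertible and C₀ = 0. -/
theorem orbit_meets_balanced_manifold {m n q s p : ℕ}
    (Ubar : Matrix (Fin m) (Fin q) ℝ) (Vbar : Matrix (Fin n) (Fin q) ℝ)
    (V0 : Matrix (Fin n) (Fin p) ℝ)
    (Lam : Matrix (Fin q) (Fin q) ℝ) (C0 : Matrix (Fin p) (Fin s) ℝ)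
    (hLamDiag : Lam.IsDiag) (hLamNonneg : ∀ i, 0 ≤ Lam i i)
    (hU : Ubarᵀ * Ubar = 1) (hV : Vbarᵀ * Vbar = 1)
    (hV0 : V0ᵀ * V0 = 1) (hVV0 : Vbarᵀ * V0 = 0) :
    (∀ A : Matrix (Fin q ⊕ Fin s) (Fin q ⊕ Fin s) ℝ, IsUnit A →
      (A * Aᵀ) * fromBlocks 1 0 0 0 * (A * Aᵀ)
        = fromBlocks (Lam * Lam) 0 0 (C0ᵀ * C0) →
      IsUnit Lam ∧ (A * Aᵀ).toBlocks₁₁ = Lam ∧ (A * Aᵀ).toBlocks₁₂ = 0 ∧ C0 = 0) ∧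
    ((∃ A : Matrix (Fin q ⊕ Fin s) (Fin q ⊕ Fin s) ℝ, IsUnit A ∧
        letI Wc : Matrix (Fin m) (Fin q ⊕ Fin s) ℝ := fromCols Ubar 0
        letI Sc : Matrix (Fin q ⊕ Fin s) (Fin n) ℝ :=
          fromRows (Lam * Vbarᵀ) (C0ᵀ * V0ᵀ)
        (Wc * A)ᵀ * (Wc * A) = (A⁻¹ * Sc) * (A⁻¹ * Sc)ᵀ) ↔
      (IsUnit Lam ∧ C0 = 0)) := by
  have hLamT : Lamᵀ = Lam := by
    ext i j
    by_cases h : i = j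
    · subst h; rfl
    · rw [transpose_apply, hLamDiag h, hLamDiag (Ne.symm h)]
  have hV0V : V0ᵀ * Vbar = 0 := by
    have h := congrArg transpose hVV0
    simpa [transpose_mul] using h
  -- Wcᵀ * Wc = diag(1,0)
  have hW : (fromCols Ubar (0 : Matrix (Fin m) (Fin s) ℝ))ᵀ
      * fromCols Ubar (0 : Matrix (Fin m) (Fin s) ℝ)
      = fromBlocks (1 : Matrix (Fin q) (Fin q) ℝ) 0 0 0 := by
    rw [transpose_fromCols, fromRows_mul_fromCols]
    simp [hU, Matrix.mul_zero, Matrix.zero_mul]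
  -- Sc * Scᵀ = diag(Λ², C₀ᵀC₀)
  have hS : fromRows (Lam * Vbarᵀ) (C0ᵀ * V0ᵀ) * (fromRows (Lam * Vbarᵀ) (C0ᵀ * V0ᵀ))ᵀ
      = fromBlocks (Lam * Lam) 0 0 (C0ᵀ * C0) := by
    rw [transpose_fromRows, fromRows_mul_fromCols]
    simp only [transpose_mul, transpose_transpose, hLamT]
    have b11 : (Lam * Vbarᵀ) * (Vbar * Lam) = Lam * Lam := by
      rw [Matrix.mul_assoc, ← Matrix.mul_assoc Vbarᵀ, hV, Matrix.one_mul]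
    have b12 : (Lam * Vbarᵀ) * (V0 * C0) = 0 := by
      rw [Matrix.mul_assoc, ← Matrix.mul_assoc Vbarᵀ, hVV0, Matrix.zero_mul, Matrix.mul_zero]
    have b21 : (C0ᵀ * V0ᵀ) * (Vbar * Lam) = 0 := by
      rw [Matrix.mul_assoc, ← Matrix.mul_assoc V0ᵀ, hV0V, Matrix.zero_mul, Matrix.mul_zero]
    have b22 : (C0ᵀ * V0ᵀ) * (V0 * C0) = C0ᵀ * C0 := by
      rw [Matrix.mul_assoc, ← Matrix.mul_assoc V0ᵀ, hV0, Matrix.one_mul]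
    rw [b11, b12, b21, b22]
  refine ⟨fun A hA heq => aux_key Lam C0 hLamDiag hLamNonneg A hA heq, ?_⟩
  constructor
  · rintro ⟨A, hA, hbal⟩
    have hAdet : IsUnit A.det := (isUnit_iff_isUnit_det A).1 hA
    have hbal2 : Aᵀ * fromBlocks (1 : Matrix (Fin q) (Fin q) ℝ) 0 0 0 * A
        = A⁻¹ * fromBlocks (Lam * Lam) 0 0 (C0ᵀ * C0) * A⁻¹ᵀ := by
      rw [← hW, ← hS]
      calc Aᵀ * ((fromCols Ubar 0)ᵀ * fromCols Ubar 0) * A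
          = (fromCols Ubar 0 * A)ᵀ * (fromCols Ubar 0 * A) := by
            rw [transpose_mul]; simp only [Matrix.mul_assoc]
        _ = (A⁻¹ * fromRows (Lam * Vbarᵀ) (C0ᵀ * V0ᵀ))
            * (A⁻¹ * fromRows (Lam * Vbarᵀ) (C0ᵀ * V0ᵀ))ᵀ := hbal
        _ = A⁻¹ * (fromRows (Lam * Vbarᵀ) (C0ᵀ * V0ᵀ)
            * (fromRows (Lam * Vbarᵀ) (C0ᵀ * V0ᵀ))ᵀ) * A⁻¹ᵀ := by
            rw [transpose_mul]; simp only [Matrix.mul_assoc]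
    have final : (A * Aᵀ) * fromBlocks 1 0 0 0 * (A * Aᵀ)
        = fromBlocks (Lam * Lam) 0 0 (C0ᵀ * C0) := by
      calc (A * Aᵀ) * fromBlocks 1 0 0 0 * (A * Aᵀ)
          = A * (Aᵀ * fromBlocks 1 0 0 0 * A) * Aᵀ := by simp only [Matrix.mul_assoc]
        _ = A * (A⁻¹ * fromBlocks (Lam * Lam) 0 0 (C0ᵀ * C0) * A⁻¹ᵀ) * Aᵀ := by rw [hbal2]
        _ = (A * A⁻¹) * fromBlocks (Lam * Lam) 0 0 (C0ᵀ * C0) * (A⁻¹ᵀ * Aᵀ) := by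
            simp only [Matrix.mul_assoc]
        _ = fromBlocks (Lam * Lam) 0 0 (C0ᵀ * C0) := by
            rw [mul_nonsing_inv _ hAdet, ← transpose_mul, mul_nonsing_inv _ hAdet,
              transpose_one, Matrix.one_mul, Matrix.mul_one]
    obtain ⟨h1, _, _, h4⟩ := aux_key Lam C0 hLamDiag hLamNonneg A hA final
    exact ⟨h1, h4⟩
  · rintro ⟨hLamUnit, hC0⟩
    subst hC0
    have hdet : Lam.det ≠ 0 := ((isUnit_iff_isUnit_det Lam).1 hLamUnit).ne_zero
    have hpos : ∀ i, 0 < Lam i i := by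
      intro i
      refine lt_of_le_of_ne (hLamNonneg i) (Ne.symm ?_)
      intro h
      apply hdet
      rw [← hLamDiag.diagonal_diag, det_diagonal]
      exact Finset.prod_eq_zero (Finset.mem_univ i) h
    set f : Fin q → ℝ := fun i => Real.sqrt (Lam i i) with hf
    have hfpos : ∀ i, 0 < f i := fun i => Real.sqrt_pos.2 (hpos i)
    set A : Matrix (Fin q ⊕ Fin s) (Fin q ⊕ Fin s) ℝ :=
      fromBlocks (diagonal f) 0 0 1 with hAdef
    set B : Matrix (Fin q ⊕ Fin s) (Fin q ⊕ Fin s) ℝ :=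
      fromBlocks (diagonal fun i => (f i)⁻¹) 0 0 1 with hBdef
    have hAB : A * B = 1 := by
      have h1 : (diagonal fun i => f i * (f i)⁻¹) = (1 : Matrix (Fin q) (Fin q) ℝ) := by
        rw [show (fun i => f i * (f i)⁻¹) = fun _ : Fin q => (1 : ℝ) from
          funext fun i => mul_inv_cancel₀ (hfpos i).ne', diagonal_one]
      rw [hAdef, hBdef, fromBlocks_multiply]
      simp only [Matrix.mul_zero, Matrix.zero_mul, Matrix.mul_one, Matrix.one_mul,
        add_zero, zero_add, diagonal_mul_diagonal]
      rw [h1]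
      exact fromBlocks_one
    have hAunit : IsUnit A := by
      rw [isUnit_iff_isUnit_det]
      exact IsUnit.of_mul_eq_one B.det (by rw [← det_mul, hAB, det_one])
    have hAinv : A⁻¹ = B := inv_eq_right_inv hAB
    refine ⟨A, hAunit, ?_⟩
    show (fromCols Ubar 0 * A)ᵀ * (fromCols Ubar 0 * A)
      = (A⁻¹ * fromRows (Lam * Vbarᵀ) ((0 : Matrix (Fin p) (Fin s) ℝ)ᵀ * V0ᵀ))
        * (A⁻¹ * fromRows (Lam * Vbarᵀ) ((0 : Matrix (Fin p) (Fin s) ℝ)ᵀ * V0ᵀ))ᵀ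
    have hAT : Aᵀ = A := by
      rw [hAdef, fromBlocks_transpose, diagonal_transpose, transpose_zero, transpose_zero,
        transpose_one]
    have hBT : Bᵀ = B := by
      rw [hBdef, fromBlocks_transpose, diagonal_transpose, transpose_zero, transpose_zero,
        transpose_one]
    have hff : diagonal f * diagonal f = Lam := by
      rw [diagonal_mul_diagonal, ← hLamDiag.diagonal_diag]
      exact congrArg Matrix.diagonal (funext fun i => Real.mul_self_sqrt (hLamNonneg i))
    have hgg : (diagonal fun i => (f i)⁻¹) * (Lam * Lam) * (diagonal fun i => (f i)⁻¹)
        = Lam := by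
      conv_lhs => rw [← hLamDiag.diagonal_diag]
      conv_rhs => rw [← hLamDiag.diagonal_diag]
      rw [diagonal_mul_diagonal, diagonal_mul_diagonal, diagonal_mul_diagonal]
      refine congrArg Matrix.diagonal (funext fun i => ?_)
      have hfi : f i * f i = Lam.diag i := Real.mul_self_sqrt (hLamNonneg i)
      calc (f i)⁻¹ * (Lam.diag i * Lam.diag i) * (f i)⁻¹
          = (Lam.diag i * Lam.diag i) * ((f i) * (f i))⁻¹ := by rw [mul_inv]; ring
        _ = (Lam.diag i * Lam.diag i) * (Lam.diag i)⁻¹ := by rw [hfi]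
        _ = Lam.diag i := by
            show Lam i i * Lam i i * (Lam i i)⁻¹ = Lam i i
            rw [mul_assoc, mul_inv_cancel₀ (hpos i).ne', mul_one]
    have hLHS : (fromCols Ubar (0 : Matrix (Fin m) (Fin s) ℝ) * A)ᵀ
        * (fromCols Ubar (0 : Matrix (Fin m) (Fin s) ℝ) * A)
        = fromBlocks Lam 0 0 0 := by
      calc (fromCols Ubar (0 : Matrix (Fin m) (Fin s) ℝ) * A)ᵀ
            * (fromCols Ubar (0 : Matrix (Fin m) (Fin s) ℝ) * A)
          = Aᵀ * ((fromCols Ubar (0 : Matrix (Fin m) (Fin s) ℝ))ᵀ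
              * fromCols Ubar (0 : Matrix (Fin m) (Fin s) ℝ)) * A := by
            rw [transpose_mul]; simp only [Matrix.mul_assoc]
        _ = A * fromBlocks 1 0 0 0 * A := by rw [hW, hAT]
        _ = fromBlocks (diagonal f * diagonal f) 0 0 0 := by
            rw [hAdef, fromBlocks_multiply, fromBlocks_multiply]
            simp only [Matrix.mul_zero, Matrix.zero_mul, Matrix.mul_one, Matrix.one_mul,
              add_zero, zero_add]
        _ = fromBlocks Lam 0 0 0 := by rw [hff]
    have hRHS : (A⁻¹ * fromRows (Lam * Vbarᵀ) ((0 : Matrix (Fin p) (Fin s) ℝ)ᵀ * V0ᵀ))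
        * (A⁻¹ * fromRows (Lam * Vbarᵀ) ((0 : Matrix (Fin p) (Fin s) ℝ)ᵀ * V0ᵀ))ᵀ
        = fromBlocks Lam 0 0 0 := by
      calc (A⁻¹ * fromRows (Lam * Vbarᵀ) ((0 : Matrix (Fin p) (Fin s) ℝ)ᵀ * V0ᵀ))
            * (A⁻¹ * fromRows (Lam * Vbarᵀ) ((0 : Matrix (Fin p) (Fin s) ℝ)ᵀ * V0ᵀ))ᵀ
          = A⁻¹ * (fromRows (Lam * Vbarᵀ) ((0 : Matrix (Fin p) (Fin s) ℝ)ᵀ * V0ᵀ)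
            * (fromRows (Lam * Vbarᵀ) ((0 : Matrix (Fin p) (Fin s) ℝ)ᵀ * V0ᵀ))ᵀ) * A⁻¹ᵀ := by
            rw [transpose_mul]; simp only [Matrix.mul_assoc]
        _ = B * fromBlocks (Lam * Lam) 0 0 0 * B := by
            rw [hS, hAinv, hBT,
              show (0 : Matrix (Fin p) (Fin s) ℝ)ᵀ * (0 : Matrix (Fin p) (Fin s) ℝ) = 0 by simp]
        _ = fromBlocks ((diagonal fun i => (f i)⁻¹) * (Lam * Lam)
              * (diagonal fun i => (f i)⁻¹)) 0 0 0 := by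
            rw [hBdef, fromBlocks_multiply, fromBlocks_multiply]
            simp only [Matrix.mul_zero, Matrix.zero_mul, Matrix.mul_one, Matrix.one_mul,
              add_zero, zero_add]
        _ = fromBlocks Lam 0 0 0 := by rw [hgg]
    rw [hLHS, hRHS]
end

section
/- Along any solution of the gradient flow d/dt (W_t, S_t) = −∇J(W_t, S_t) for J(W,S) = (1/2)‖X − WS‖_F², the matrix W_tᵀW_t − S_tS_tᵀ is constant in t; in particular ‖W_t‖_F² − ‖S_t‖_F² is constant. -/
open Matrix

/-- along any solution of the gradient flow
Ẇ = −(WS−X)Sᵀ, Ṡ = −Wᵀ(WS−X), the matrix WᵀW − SSᵀ is constant in time;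
in particular ‖W‖_F² − ‖S‖_F² is constant. -/
theorem gradient_flow_invariant {m n k : ℕ}
    (X : Matrix (Fin m) (Fin n) ℝ)
    (W : ℝ → Matrix (Fin m) (Fin k) ℝ) (S : ℝ → Matrix (Fin k) (Fin n) ℝ)
    (hW : ∀ (t : ℝ) (i : Fin m) (j : Fin k),
      HasDerivAt (fun τ => W τ i j) ((-((W t * S t - X) * (S t)ᵀ)) i j) t)
    (hS : ∀ (t : ℝ) (i : Fin k) (j : Fin n),
      HasDerivAt (fun τ => S τ i j) ((-((W t)ᵀ * (W t * S t - X))) i j) t) :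
    (∀ t t' : ℝ, (W t)ᵀ * W t - S t * (S t)ᵀ = (W t')ᵀ * W t' - S t' * (S t')ᵀ) ∧
    (∀ t t' : ℝ,
      ((W t)ᵀ * W t).trace - (S t * (S t)ᵀ).trace
        = ((W t')ᵀ * W t').trace - (S t' * (S t')ᵀ).trace) := by
  have key : ∀ (a b : Fin k) (t : ℝ),
      HasDerivAt (fun τ => ((W τ)ᵀ * W τ - S τ * (S τ)ᵀ) a b) 0 t := by
    intro a b t
    set R := W t * S t - X with hR
    set Wd := -(R * (S t)ᵀ) with hWd
    set Sd := -((W t)ᵀ * R) with hSd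
    have h1 : HasDerivAt (fun τ => ∑ i, W τ i a * W τ i b)
        (∑ i, (Wd i a * W t i b + W t i a * Wd i b)) t :=
      HasDerivAt.fun_sum fun i _ => (hW t i a).mul (hW t i b)
    have h2 : HasDerivAt (fun τ => ∑ j, S τ a j * S τ b j)
        (∑ j, (Sd a j * S t b j + S t a j * Sd b j)) t :=
      HasDerivAt.fun_sum fun j _ => (hS t a j).mul (hS t b j)
    have h3 := h1.sub h2
    have e1 : (∑ i, (Wd i a * W t i b + W t i a * Wd i b)) =
        (Wdᵀ * W t + (W t)ᵀ * Wd) a b := by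
      simp [Matrix.add_apply, Matrix.mul_apply, Finset.sum_add_distrib]
    have e2 : (∑ j, (Sd a j * S t b j + S t a j * Sd b j)) =
        (Sd * (S t)ᵀ + S t * Sdᵀ) a b := by
      simp [Matrix.add_apply, Matrix.mul_apply, Finset.sum_add_distrib,
        mul_comm]
    have hzero : Wdᵀ * W t + (W t)ᵀ * Wd = Sd * (S t)ᵀ + S t * Sdᵀ := by
      simp only [hWd, hSd, Matrix.transpose_neg, Matrix.transpose_mul,
        Matrix.transpose_transpose, Matrix.neg_mul, Matrix.mul_neg,
        Matrix.mul_assoc]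
      abel
    have hval : (∑ i, (Wd i a * W t i b + W t i a * Wd i b)) -
        (∑ j, (Sd a j * S t b j + S t a j * Sd b j)) = 0 := by
      rw [e1, e2, hzero, sub_self]
    rw [hval] at h3
    have hfun : (fun τ => ((W τ)ᵀ * W τ - S τ * (S τ)ᵀ) a b) =
        (fun τ => (∑ i, W τ i a * W τ i b) - ∑ j, S τ a j * S τ b j) := by
      funext τ
      simp [Matrix.sub_apply, Matrix.mul_apply, mul_comm]
    rw [hfun]
    exact h3
  have hconst : ∀ (a b : Fin k) (t t' : ℝ),
      ((W t)ᵀ * W t - S t * (S t)ᵀ) a b = ((W t')ᵀ * W t' - S t' * (S t')ᵀ) a b := by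
    intro a b t t'
    have := is_const_of_deriv_eq_zero (f := fun τ => ((W τ)ᵀ * W τ - S τ * (S τ)ᵀ) a b)
      (fun x => (key a b x).differentiableAt) (fun x => (key a b x).deriv) t t'
    exact this
  have hmat : ∀ t t' : ℝ, (W t)ᵀ * W t - S t * (S t)ᵀ = (W t')ᵀ * W t' - S t' * (S t')ᵀ := by
    intro t t'
    ext a b
    exact hconst a b t t'
  refine ⟨hmat, fun t t' => ?_⟩
  have := congrArg Matrix.trace (hmat t t')
  simpa [Matrix.trace_sub] using this
end
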